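/- arXiv:1105.3053 — 6 statements merged into one kernel-verified Lean document; each statement's English description precedes it below -/
import Mathlib

section
/- Let ξ₁, ξ₂, ξ₃ be vectors in ℝ² such that the origin lies in the interior of the triangle Π[ξ₁,ξ₂,ξ₃] = conv{ξ₁,ξ₂,ξ₃}, and let f(ξ₁), f(ξ₂), f(ξ₃) be arbitrary real numbers. Then the quantity min_{γ∈ℝ²} max_{i∈{1,2,3}} [f(ξᵢ) − ⟨ξᵢ,γ⟩] equals (f(ξ₁)D(ξ₂,ξ₃) + f(ξ₂)D(ξ₃,ξ₁) + f(ξ₃)D(ξ₁,ξ₂)) / (D(ξ₂,ξ₃)+D(ξ₃,ξ₁)+D(ξ₁,ξ₂)), and the minimum is attained at the unique point γ₀ = (f(ξ₁)R(ξ₂−ξ₃) + f(ξ₂)R(ξ₃−ξ₁) + f(ξ₃)R(ξ₁−ξ₂)) / (D(ξ₂,ξ₃)+D(ξ₃,ξ₁)+D(ξ₁,ξ₂)). -/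
noncomputable section

/-- Standard inner product on ℝ². -/
def dotp2 (u v : Fin 2 → ℝ) : ℝ := u 0 * v 0 + u 1 * v 1

/-- Oriented area of the parallelogram built on `u, v`. -/
def D2 (u v : Fin 2 → ℝ) : ℝ := u 0 * v 1 - u 1 * v 0

/-- Rotation `R(u) = (u², -u¹)`. -/
def R2 (u : Fin 2 → ℝ) : Fin 2 → ℝ := ![u 1, -u 0]

/-!
Write `a = D(ξ₂,ξ₃)`, `b = D(ξ₃,ξ₁)`, `c = D(ξ₁,ξ₂)` and `S = a + b + c`. Cramer's rule gives
`a ξ₁ + b ξ₂ + c ξ₃ = 0`, so `a (f₁ - ⟨ξ₁,γ⟩) + b (f₂ - ⟨ξ₂,γ⟩) + c (f₃ - ⟨ξ₃,γ⟩) = S V` for every `γ`.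
The weights `a/S, b/S, c/S` are the barycentric coordinates of the origin, positive because no
nonzero linear functional is `≤ 0` at all three vertices of a triangle with `0` in its interior.
Hence `V` is a weighted mean of the three values, so their maximum is at least `V`, with equality
only if all three equal `V`; two of these equations already determine `γ`, and `γ₀` solves them.
-/

open Module Filter Topology

theorem Collinear.interior_convexHull_eq_empty {V : Type*} [NormedAddCommGroup V]
    [NormedSpace ℝ V] [FiniteDimensional ℝ V] {s : Set V} (hs : Collinear ℝ s)
    (hV : 1 < finrank ℝ V) : interior (convexHull ℝ s) = ∅ := by
  by_contra h
  have hspan := AffineSubspace.vectorSpan_eq_top_of_affineSpan_eq_top ℝ V V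
    (interior_convexHull_nonempty_iff_affineSpan_eq_top.1 (Set.nonempty_iff_ne_empty.2 h))
  have := hs.finrank_le_one
  rw [hspan, finrank_top] at this
  omega

theorem exists_pos_of_zero_mem_interior_convexHull {E : Type*} [AddCommGroup E] [Module ℝ E]
    [TopologicalSpace E] [ContinuousSMul ℝ E] {s : Set E}
    (hs : (0 : E) ∈ interior (convexHull ℝ s)) (φ : E →ₗ[ℝ] ℝ) {v : E} (hv : 0 < φ v) :
    ∃ x ∈ s, 0 < φ x := by
  by_contra! h
  have hhull : convexHull ℝ s ⊆ {x | φ x ≤ 0} :=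
    convexHull_min h (convex_halfSpace_le φ.isLinear 0)
  have hray : Tendsto (fun t : ℝ => t • v) (𝓝[>] 0) (𝓝 0) := by
    refine Tendsto.mono_left ?_ nhdsWithin_le_nhds
    simpa using (tendsto_id (x := 𝓝 (0 : ℝ))).smul_const v
  obtain ⟨t, ht, htpos⟩ :=
    ((hray.eventually (mem_interior_iff_mem_nhds.1 hs)).and self_mem_nhdsWithin).exists
  have := hhull ht
  simp only [Set.mem_ofPred_eq, map_smul, smul_eq_mul] at this
  exact this.not_gt (mul_pos htpos hv)

def D2LinearLeft (w : Fin 2 → ℝ) : (Fin 2 → ℝ) →ₗ[ℝ] ℝ where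
  toFun u := D2 u w
  map_add' u v := by simp only [D2, Pi.add_apply]; ring
  map_smul' c u := by simp only [D2, Pi.smul_apply, smul_eq_mul, RingHom.id_apply]; ring

lemma D2_R2_self_pos {w : Fin 2 → ℝ} (hw : w ≠ 0) : 0 < D2 (R2 w) w := by
  have hsq : D2 (R2 w) w = w 0 ^ 2 + w 1 ^ 2 := by
    simp only [D2, R2, Matrix.cons_val_zero, Matrix.cons_val_one]; ring
  rw [hsq]
  obtain ⟨i, hi⟩ := Function.ne_iff.mp hw
  fin_cases i <;> simp only [Pi.zero_apply] at hi <;> positivity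

lemma D2_mul_sum_pos {ξ₁ ξ₂ ξ₃ : Fin 2 → ℝ}
    (hin : (0 : Fin 2 → ℝ) ∈ interior (convexHull ℝ ({ξ₁, ξ₂, ξ₃} : Set (Fin 2 → ℝ)))) :
    0 < D2 ξ₂ ξ₃ * (D2 ξ₂ ξ₃ + D2 ξ₃ ξ₁ + D2 ξ₁ ξ₂) := by
  have hne : ξ₃ - ξ₂ ≠ 0 := by
    intro h
    rw [sub_eq_zero.1 h, Set.pair_eq_singleton, (collinear_pair ℝ ξ₁ ξ₂).interior_convexHull_eq_empty
      (by simp)] at hin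
    exact hin
  have hsep (w : Fin 2 → ℝ) (hw : w ≠ 0) : ∃ x ∈ ({ξ₁, ξ₂, ξ₃} : Set (Fin 2 → ℝ)), 0 < D2 x w :=
    exists_pos_of_zero_mem_interior_convexHull hin (D2LinearLeft w) (D2_R2_self_pos hw)
  -- `D2 · (ξ₃ - ξ₂)` takes the values `a - S, a, a` at `ξ₁, ξ₂, ξ₃`, where `a = D2 ξ₂ ξ₃`.
  obtain ⟨x, hx, hpos⟩ := hsep _ hne
  obtain ⟨y, hy, hneg⟩ := hsep _ (neg_ne_zero.2 hne)
  simp only [Set.mem_insert_iff, Set.mem_singleton_iff] at hx hy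
  rcases hx with rfl | rfl | rfl <;> rcases hy with rfl | rfl | rfl <;>
    simp only [D2, Pi.sub_apply, Pi.neg_apply] at hpos hneg ⊢ <;> nlinarith

lemma D2_mul_dotp2_add_cyclic (ξ₁ ξ₂ ξ₃ γ : Fin 2 → ℝ) :
    D2 ξ₂ ξ₃ * dotp2 ξ₁ γ + D2 ξ₃ ξ₁ * dotp2 ξ₂ γ + D2 ξ₁ ξ₂ * dotp2 ξ₃ γ = 0 := by
  simp only [D2, dotp2]; ring

lemma eq_of_dotp2_eq_of_D2_ne_zero {ξ₁ ξ₂ γ γ' : Fin 2 → ℝ} (hD : D2 ξ₁ ξ₂ ≠ 0)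
    (h₁ : dotp2 ξ₁ γ = dotp2 ξ₁ γ') (h₂ : dotp2 ξ₂ γ = dotp2 ξ₂ γ') : γ = γ' := by
  simp only [dotp2] at h₁ h₂
  have h₀ : D2 ξ₁ ξ₂ * (γ 0 - γ' 0) = 0 := by
    simp only [D2]; linear_combination ξ₂ 1 * h₁ - ξ₁ 1 * h₂
  have h₁' : D2 ξ₁ ξ₂ * (γ 1 - γ' 1) = 0 := by
    simp only [D2]; linear_combination ξ₁ 0 * h₂ - ξ₂ 0 * h₁
  ext i
  fin_cases i
  · exact sub_eq_zero.1 ((mul_eq_zero.1 h₀).resolve_left hD)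
  · exact sub_eq_zero.1 ((mul_eq_zero.1 h₁').resolve_left hD)

lemma dotp2_smul_sum_smul_R2 (u ξ₁ ξ₂ ξ₃ : Fin 2 → ℝ) (t f₁ f₂ f₃ : ℝ) :
    dotp2 u (t • (f₁ • R2 (ξ₂ - ξ₃) + f₂ • R2 (ξ₃ - ξ₁) + f₃ • R2 (ξ₁ - ξ₂))) =
      t * (f₁ * (D2 u ξ₂ - D2 u ξ₃) + f₂ * (D2 u ξ₃ - D2 u ξ₁) + f₃ * (D2 u ξ₁ - D2 u ξ₂)) := by
  simp only [dotp2, D2, R2, Pi.smul_apply, Pi.add_apply, Pi.sub_apply, smul_eq_mul,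
    Matrix.cons_val_zero, Matrix.cons_val_one]
  ring

section WeightedMean

variable {w₁ w₂ w₃ y₁ y₂ y₃ v : ℝ}

lemma le_max_max_of_weighted_mean (h₁ : 0 < w₁) (h₂ : 0 < w₂) (h₃ : 0 < w₃)
    (h : w₁ * y₁ + w₂ * y₂ + w₃ * y₃ = (w₁ + w₂ + w₃) * v) : v ≤ max (max y₁ y₂) y₃ := by
  by_contra! hlt
  simp only [max_lt_iff] at hlt
  obtain ⟨⟨hy₁, hy₂⟩, hy₃⟩ := hlt
  nlinarith [mul_lt_mul_of_pos_left hy₁ h₁, mul_lt_mul_of_pos_left hy₂ h₂,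
    mul_lt_mul_of_pos_left hy₃ h₃]

lemma eq_of_max_max_eq_weighted_mean (h₁ : 0 < w₁) (h₂ : 0 < w₂) (h₃ : 0 < w₃)
    (h : w₁ * y₁ + w₂ * y₂ + w₃ * y₃ = (w₁ + w₂ + w₃) * v) (hmax : max (max y₁ y₂) y₃ = v) :
    y₁ = v ∧ y₂ = v ∧ y₃ = v := by
  have hy₁ : y₁ ≤ v := hmax ▸ (le_max_left _ _).trans (le_max_left _ _)
  have hy₂ : y₂ ≤ v := hmax ▸ (le_max_right _ _).trans (le_max_left _ _)
  have hy₃ : y₃ ≤ v := hmax ▸ le_max_right _ _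
  refine ⟨?_, ?_, ?_⟩ <;> nlinarith [mul_le_mul_of_nonneg_left hy₁ h₁.le,
    mul_le_mul_of_nonneg_left hy₂ h₂.le, mul_le_mul_of_nonneg_left hy₃ h₃.le]

end WeightedMean

theorem stmt0 (ξ₁ ξ₂ ξ₃ : Fin 2 → ℝ)
    (hin : (0 : Fin 2 → ℝ) ∈ interior (convexHull ℝ ({ξ₁, ξ₂, ξ₃} : Set (Fin 2 → ℝ))))
    (f₁ f₂ f₃ : ℝ) :
    let Dsum : ℝ := D2 ξ₂ ξ₃ + D2 ξ₃ ξ₁ + D2 ξ₁ ξ₂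
    let V : ℝ := (f₁ * D2 ξ₂ ξ₃ + f₂ * D2 ξ₃ ξ₁ + f₃ * D2 ξ₁ ξ₂) / Dsum
    let γ₀ : Fin 2 → ℝ := Dsum⁻¹ • (f₁ • R2 (ξ₂ - ξ₃) + f₂ • R2 (ξ₃ - ξ₁) + f₃ • R2 (ξ₁ - ξ₂))
    let F : (Fin 2 → ℝ) → ℝ :=
      fun γ => max (max (f₁ - dotp2 ξ₁ γ) (f₂ - dotp2 ξ₂ γ)) (f₃ - dotp2 ξ₃ γ)
    IsLeast (Set.range F) V ∧ F γ₀ = V ∧ ∀ γ, F γ = V → γ = γ₀ := by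
  intro Dsum V γ₀ F
  have hpos₁ : 0 < D2 ξ₂ ξ₃ * Dsum := D2_mul_sum_pos hin
  have hpos₂ : 0 < D2 ξ₃ ξ₁ * Dsum :=
    (D2_mul_sum_pos (by rwa [Set.pair_comm, Set.insert_comm])).trans_eq (by ring)
  have hpos₃ : 0 < D2 ξ₁ ξ₂ * Dsum :=
    (D2_mul_sum_pos (by rwa [Set.insert_comm, Set.pair_comm])).trans_eq (by ring)
  have hS : Dsum ≠ 0 := right_ne_zero_of_mul hpos₁.ne'
  have hV : Dsum * V = f₁ * D2 ξ₂ ξ₃ + f₂ * D2 ξ₃ ξ₁ + f₃ * D2 ξ₁ ξ₂ := mul_div_cancel₀ _ hS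
  clear_value V
  have hmean (γ : Fin 2 → ℝ) :
      D2 ξ₂ ξ₃ * Dsum * (f₁ - dotp2 ξ₁ γ) + D2 ξ₃ ξ₁ * Dsum * (f₂ - dotp2 ξ₂ γ) +
        D2 ξ₁ ξ₂ * Dsum * (f₃ - dotp2 ξ₃ γ) =
      (D2 ξ₂ ξ₃ * Dsum + D2 ξ₃ ξ₁ * Dsum + D2 ξ₁ ξ₂ * Dsum) * V := by
    linear_combination (-Dsum) * D2_mul_dotp2_add_cyclic ξ₁ ξ₂ ξ₃ γ - Dsum * hV
  have hγ₀ : dotp2 ξ₁ γ₀ = f₁ - V ∧ dotp2 ξ₂ γ₀ = f₂ - V ∧ dotp2 ξ₃ γ₀ = f₃ - V := by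
    refine ⟨?_, ?_, ?_⟩ <;>
      rw [dotp2_smul_sum_smul_R2, inv_mul_eq_iff_eq_mul₀ hS] <;>
      simp only [Dsum, D2] at hV ⊢ <;> linear_combination hV
  have hFγ₀ : F γ₀ = V := by simp only [F, hγ₀, sub_sub_cancel, max_self]
  refine ⟨⟨⟨γ₀, hFγ₀⟩, ?_⟩, hFγ₀, fun γ hγ => ?_⟩
  · rintro _ ⟨γ, rfl⟩
    exact le_max_max_of_weighted_mean hpos₁ hpos₂ hpos₃ (hmean γ)
  · obtain ⟨h₁, h₂, -⟩ := eq_of_max_max_eq_weighted_mean hpos₁ hpos₂ hpos₃ (hmean γ) hγ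
    exact eq_of_dotp2_eq_of_D2_ne_zero (left_ne_zero_of_mul hpos₃.ne')
      (by linarith [hγ₀.1]) (by linarith [hγ₀.2.1])
end
end

section
/- Let ξ₁, ξ₂, ξ₃ be vectors in ℝ² such that the origin lies in the interior of conv{ξ₁,ξ₂,ξ₃}. Then the weights p₁ = D(ξ₂,ξ₃)/Σ, p₂ = D(ξ₃,ξ₁)/Σ, p₃ = D(ξ₁,ξ₂)/Σ, where Σ = D(ξ₂,ξ₃)+D(ξ₃,ξ₁)+D(ξ₁,ξ₂), form the unique probability distribution on {ξ₁,ξ₂,ξ₃} satisfying p₁ξ₁+p₂ξ₂+p₃ξ₃ = 0, and for arbitrary real numbers f(ξ₁),f(ξ₂),f(ξ₃), min_{γ∈ℝ²} max_{i∈{1,2,3}} [f(ξᵢ) − ⟨ξᵢ,γ⟩] = p₁f(ξ₁)+p₂f(ξ₂)+p₃f(ξ₃). -/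
/-!
Eliminating the unknowns from `q₁ + q₂ + q₃ = 1`, `q₁ ξ₁ + q₂ ξ₂ + q₃ ξ₃ = 0` by Cramer's rule gives
`qᵢ · Σ = D(ξⱼ, ξₖ)`, so once `Σ ≠ 0` the barycentric weights of `0`, which are nonnegative as
`0` lies in the hull, are the only risk-neutral law. And `Σ = D(ξ₂ - ξ₁, ξ₃ - ξ₁)` vanishes only
for collinear points, whose hull lies in a line and has empty interior. Since
`Σ pᵢ ξᵢ = 0`, averaging `fᵢ - ⟨ξᵢ, γ⟩` against `p` gives `E = Σ pᵢ fᵢ` for every `γ`, so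
`E ≤ F γ`; and the linear system `⟨ξᵢ, γ⟩ = fᵢ - E` is solvable because its right-hand side is
annihilated by `p`, the only relation among the rows, so the minimum is attained there.
-/

noncomputable section

theorem LinearMap.eq_zero_of_forall_eq_of_mem_interior {E F : Type*} [AddCommGroup E]
    [Module ℝ E] [TopologicalSpace E] [ContinuousAdd E] [ContinuousSMul ℝ E] [AddCommGroup F]
    [Module ℝ F] (ℓ : E →ₗ[ℝ] F) {s : Set E} {x : E} (hx : x ∈ interior s)
    (hℓ : ∀ y ∈ s, ℓ y = ℓ x) : ℓ = 0 := by
  ext v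
  have hline : Filter.Tendsto (fun t : ℝ => x + t • v) (nhds 0) (nhds x) := by
    simpa using
      (tendsto_const_nhds (x := x)).add ((Filter.tendsto_id (x := nhds (0 : ℝ))).smul_const v)
  obtain ⟨t, hts, ht⟩ :=
    ((hline.eventually (mem_interior_iff_mem_nhds.mp hx)).filter_mono nhdsWithin_le_nhds).and
      (self_mem_nhdsWithin (s := Set.Ioi (0 : ℝ))) |>.exists
  have : t • ℓ v = 0 := by simpa using hℓ _ hts
  exact (smul_eq_zero.mp this).resolve_left (ne_of_gt ht)

theorem exists_smul_add_smul_add_smul_of_mem_convexHull {𝕜 E : Type*} [Field 𝕜] [LinearOrder 𝕜]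
    [IsStrictOrderedRing 𝕜] [AddCommGroup E] [Module 𝕜 E] {a b c x : E}
    (hx : x ∈ convexHull 𝕜 {a, b, c}) :
    ∃ q₁ q₂ q₃ : 𝕜, 0 ≤ q₁ ∧ 0 ≤ q₂ ∧ 0 ≤ q₃ ∧ q₁ + q₂ + q₃ = 1 ∧
      q₁ • a + q₂ • b + q₃ • c = x := by
  rw [← convexJoin_singleton_segment, mem_convexJoin] at hx
  obtain ⟨_, rfl, y, ⟨s, t, hs, ht, hst, rfl⟩, r, u, hr, hu, hru, rfl⟩ := hx
  refine ⟨r, u * s, u * t, hr, mul_nonneg hu hs, mul_nonneg hu ht,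
    by linear_combination hru + u * hst, ?_⟩
  simp only [smul_add, mul_smul, add_assoc]

theorem weighted_sum_le_max_max {p₁ p₂ p₃ : ℝ} (h₁ : 0 ≤ p₁) (h₂ : 0 ≤ p₂) (h₃ : 0 ≤ p₃)
    (hp : p₁ + p₂ + p₃ = 1) (a₁ a₂ a₃ : ℝ) :
    p₁ * a₁ + p₂ * a₂ + p₃ * a₃ ≤ max (max a₁ a₂) a₃ := by
  set M := max (max a₁ a₂) a₃
  calc p₁ * a₁ + p₂ * a₂ + p₃ * a₃ ≤ p₁ * M + p₂ * M + p₃ * M := by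
        gcongr
        · exact le_max_of_le_left (le_max_left _ _)
        · exact le_max_of_le_left (le_max_right _ _)
        · exact le_max_right _ _
    _ = M := by linear_combination M * hp

theorem isLinearMap_D2 (w : Fin 2 → ℝ) : IsLinearMap ℝ (D2 w) :=
  ⟨fun u v => by simp only [D2, Pi.add_apply]; ring,
    fun c u => by simp only [D2, Pi.smul_apply, smul_eq_mul]; ring⟩

theorem eq_zero_of_forall_D2_eq_zero {w : Fin 2 → ℝ} (h : ∀ v, D2 w v = 0) : w = 0 := by
  have h₀ := h (Pi.single 1 1)
  have h₁ := h (Pi.single 0 1)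
  simp only [D2, Pi.single_apply] at h₀ h₁
  ext i
  fin_cases i <;> simp_all

theorem exists_ne_zero_D2_eq_zero {u v : Fin 2 → ℝ} (h : D2 u v = 0) :
    ∃ w ≠ 0, D2 w u = 0 ∧ D2 w v = 0 := by
  by_cases hu : u = 0
  · by_cases hv : v = 0
    · exact ⟨![1, 0], by simp, by simp [hu, D2], by simp [hv, D2]⟩
    · exact ⟨v, hv, by simp [hu, D2], by simp only [D2]; ring⟩
  · exact ⟨u, hu, by simp only [D2]; ring, h⟩

theorem D2_smul_add_D2_smul_add_D2_smul (ξ₁ ξ₂ ξ₃ : Fin 2 → ℝ) :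
    D2 ξ₂ ξ₃ • ξ₁ + D2 ξ₃ ξ₁ • ξ₂ + D2 ξ₁ ξ₂ • ξ₃ = 0 := by
  ext i
  fin_cases i <;> simp [D2] <;> ring

theorem mul_sum_D2_eq_of_sum_smul_eq_zero {ξ₁ ξ₂ ξ₃ : Fin 2 → ℝ} {q₁ q₂ q₃ : ℝ}
    (hq : q₁ + q₂ + q₃ = 1) (hξ : q₁ • ξ₁ + q₂ • ξ₂ + q₃ • ξ₃ = 0) :
    let Dsum := D2 ξ₂ ξ₃ + D2 ξ₃ ξ₁ + D2 ξ₁ ξ₂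
    q₁ * Dsum = D2 ξ₂ ξ₃ ∧ q₂ * Dsum = D2 ξ₃ ξ₁ ∧ q₃ * Dsum = D2 ξ₁ ξ₂ := by
  intro Dsum
  have e₀ := congrFun hξ 0
  have e₁ := congrFun hξ 1
  simp only [Pi.add_apply, Pi.smul_apply, smul_eq_mul, Pi.zero_apply] at e₀ e₁
  refine ⟨?_, ?_, ?_⟩ <;> simp only [Dsum, D2]
  · linear_combination (ξ₂ 1 - ξ₃ 1) * e₀ + (ξ₃ 0 - ξ₂ 0) * e₁ + (ξ₂ 0 * ξ₃ 1 - ξ₂ 1 * ξ₃ 0) * hq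
  · linear_combination (ξ₃ 1 - ξ₁ 1) * e₀ + (ξ₁ 0 - ξ₃ 0) * e₁ + (ξ₃ 0 * ξ₁ 1 - ξ₃ 1 * ξ₁ 0) * hq
  · linear_combination (ξ₁ 1 - ξ₂ 1) * e₀ + (ξ₂ 0 - ξ₁ 0) * e₁ + (ξ₁ 0 * ξ₂ 1 - ξ₁ 1 * ξ₂ 0) * hq

theorem sum_D2_ne_zero_of_interior_convexHull_nonempty {ξ₁ ξ₂ ξ₃ : Fin 2 → ℝ}
    (hin : (interior (convexHull ℝ ({ξ₁, ξ₂, ξ₃} : Set (Fin 2 → ℝ)))).Nonempty) :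
    D2 ξ₂ ξ₃ + D2 ξ₃ ξ₁ + D2 ξ₁ ξ₂ ≠ 0 := by
  intro hD
  have hcollinear : D2 (ξ₂ - ξ₁) (ξ₃ - ξ₁) = 0 := by
    rw [← hD]
    simp only [D2, Pi.sub_apply]
    ring
  obtain ⟨w, hw, hw₂, hw₃⟩ := exists_ne_zero_D2_eq_zero hcollinear
  have hline : convexHull ℝ {ξ₁, ξ₂, ξ₃} ⊆ {y | D2 w y = D2 w ξ₁} := by
    refine convexHull_min ?_ (convex_hyperplane (isLinearMap_D2 w) _)
    simp only [D2, Pi.sub_apply] at hw₂ hw₃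
    rintro y (rfl | rfl | rfl) <;> simp only [Set.mem_ofPred_eq, D2] <;> linarith
  obtain ⟨x, hx⟩ := hin
  refine hw (eq_zero_of_forall_D2_eq_zero fun v => ?_)
  have := ((isLinearMap_D2 w).mk').eq_zero_of_forall_eq_of_mem_interior hx
    fun y hy => (hline hy).trans (hline (interior_subset hx)).symm
  exact LinearMap.congr_fun this v

theorem exists_dotp2_eq_of_sum_D2_mul_eq_zero {ξ₁ ξ₂ ξ₃ : Fin 2 → ℝ}
    (hD : D2 ξ₂ ξ₃ + D2 ξ₃ ξ₁ + D2 ξ₁ ξ₂ ≠ 0) {g₁ g₂ g₃ : ℝ}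
    (hg : D2 ξ₂ ξ₃ * g₁ + D2 ξ₃ ξ₁ * g₂ + D2 ξ₁ ξ₂ * g₃ = 0) :
    ∃ γ, dotp2 ξ₁ γ = g₁ ∧ dotp2 ξ₂ γ = g₂ ∧ dotp2 ξ₃ γ = g₃ := by
  -- `γ = Σ⁻¹ (g₁ J(ξ₂ - ξ₃) + g₂ J(ξ₃ - ξ₁) + g₃ J(ξ₁ - ξ₂))` with `J (a, b) = (b, -a)`,
  -- so that `⟨ξ, J v⟩ = D(ξ, v)`.
  refine ⟨(D2 ξ₂ ξ₃ + D2 ξ₃ ξ₁ + D2 ξ₁ ξ₂)⁻¹ •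
    ![g₁ * (ξ₂ 1 - ξ₃ 1) + g₂ * (ξ₃ 1 - ξ₁ 1) + g₃ * (ξ₁ 1 - ξ₂ 1),
      g₁ * (ξ₃ 0 - ξ₂ 0) + g₂ * (ξ₁ 0 - ξ₃ 0) + g₃ * (ξ₂ 0 - ξ₁ 0)], ?_, ?_, ?_⟩ <;>
  · simp only [dotp2, Pi.smul_apply, smul_eq_mul, Matrix.cons_val_zero, Matrix.cons_val_one]
    field_simp
    simp only [D2] at hg ⊢
    linear_combination -hg

theorem weighted_sum_le_max_sub_dotp2 {ξ₁ ξ₂ ξ₃ : Fin 2 → ℝ} {p₁ p₂ p₃ : ℝ} (h₁ : 0 ≤ p₁)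
    (h₂ : 0 ≤ p₂) (h₃ : 0 ≤ p₃) (hp : p₁ + p₂ + p₃ = 1) (hξ : p₁ • ξ₁ + p₂ • ξ₂ + p₃ • ξ₃ = 0)
    (f₁ f₂ f₃ : ℝ) (γ : Fin 2 → ℝ) :
    p₁ * f₁ + p₂ * f₂ + p₃ * f₃ ≤
      max (max (f₁ - dotp2 ξ₁ γ) (f₂ - dotp2 ξ₂ γ)) (f₃ - dotp2 ξ₃ γ) := by
  have e₀ := congrFun hξ 0
  have e₁ := congrFun hξ 1
  simp only [Pi.add_apply, Pi.smul_apply, smul_eq_mul, Pi.zero_apply] at e₀ e₁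
  calc p₁ * f₁ + p₂ * f₂ + p₃ * f₃
      = p₁ * (f₁ - dotp2 ξ₁ γ) + p₂ * (f₂ - dotp2 ξ₂ γ) + p₃ * (f₃ - dotp2 ξ₃ γ) := by
        simp only [dotp2]
        linear_combination γ 0 * e₀ + γ 1 * e₁
    _ ≤ _ := weighted_sum_le_max_max h₁ h₂ h₃ hp _ _ _

theorem stmt1 (ξ₁ ξ₂ ξ₃ : Fin 2 → ℝ)
    (hin : (0 : Fin 2 → ℝ) ∈ interior (convexHull ℝ ({ξ₁, ξ₂, ξ₃} : Set (Fin 2 → ℝ))))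
    (f₁ f₂ f₃ : ℝ) :
    let Dsum : ℝ := D2 ξ₂ ξ₃ + D2 ξ₃ ξ₁ + D2 ξ₁ ξ₂
    let p₁ : ℝ := D2 ξ₂ ξ₃ / Dsum
    let p₂ : ℝ := D2 ξ₃ ξ₁ / Dsum
    let p₃ : ℝ := D2 ξ₁ ξ₂ / Dsum
    let F : (Fin 2 → ℝ) → ℝ :=
      fun γ => max (max (f₁ - dotp2 ξ₁ γ) (f₂ - dotp2 ξ₂ γ)) (f₃ - dotp2 ξ₃ γ)
    -- the weights form a risk-neutral probability law
    (0 ≤ p₁ ∧ 0 ≤ p₂ ∧ 0 ≤ p₃ ∧ p₁ + p₂ + p₃ = 1 ∧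
      p₁ • ξ₁ + p₂ • ξ₂ + p₃ • ξ₃ = 0) ∧
    -- uniqueness of the risk-neutral probability law
    (∀ q₁ q₂ q₃ : ℝ, 0 ≤ q₁ → 0 ≤ q₂ → 0 ≤ q₃ → q₁ + q₂ + q₃ = 1 →
      q₁ • ξ₁ + q₂ • ξ₂ + q₃ • ξ₃ = 0 → q₁ = p₁ ∧ q₂ = p₂ ∧ q₃ = p₃) ∧
    -- the minimax equals the risk-neutral expectation
    IsLeast (Set.range F) (p₁ * f₁ + p₂ * f₂ + p₃ * f₃) := by
  intro Dsum p₁ p₂ p₃ F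
  have hD : Dsum ≠ 0 := sum_D2_ne_zero_of_interior_convexHull_nonempty ⟨0, hin⟩
  have hunique : ∀ q₁ q₂ q₃ : ℝ, q₁ + q₂ + q₃ = 1 → q₁ • ξ₁ + q₂ • ξ₂ + q₃ • ξ₃ = 0 →
      q₁ = p₁ ∧ q₂ = p₂ ∧ q₃ = p₃ := fun q₁ q₂ q₃ hq hξ => by
    obtain ⟨h₁, h₂, h₃⟩ := mul_sum_D2_eq_of_sum_smul_eq_zero hq hξ
    exact ⟨eq_div_of_mul_eq hD h₁, eq_div_of_mul_eq hD h₂, eq_div_of_mul_eq hD h₃⟩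
  have hsum : p₁ + p₂ + p₃ = 1 := by
    simp only [p₁, p₂, p₃, ← add_div]
    exact div_self hD
  have hcomb : p₁ • ξ₁ + p₂ • ξ₂ + p₃ • ξ₃ = 0 := by
    simp only [p₁, p₂, p₃, div_eq_inv_mul, mul_smul, ← smul_add,
      D2_smul_add_D2_smul_add_D2_smul, smul_zero]
  obtain ⟨hp₁, hp₂, hp₃⟩ : 0 ≤ p₁ ∧ 0 ≤ p₂ ∧ 0 ≤ p₃ := by
    obtain ⟨q₁, q₂, q₃, hq₁, hq₂, hq₃, hq, hξ⟩ :=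
      exists_smul_add_smul_add_smul_of_mem_convexHull (interior_subset hin)
    obtain ⟨h₁, h₂, h₃⟩ := hunique q₁ q₂ q₃ hq hξ
    exact ⟨h₁ ▸ hq₁, h₂ ▸ hq₂, h₃ ▸ hq₃⟩
  refine ⟨⟨hp₁, hp₂, hp₃, hsum, hcomb⟩, fun q₁ q₂ q₃ _ _ _ => hunique q₁ q₂ q₃, ?_, ?_⟩
  · set E := p₁ * f₁ + p₂ * f₂ + p₃ * f₃
    have hg : D2 ξ₂ ξ₃ * (f₁ - E) + D2 ξ₃ ξ₁ * (f₂ - E) + D2 ξ₁ ξ₂ * (f₃ - E) = 0 := by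
      rw [← div_mul_cancel₀ (D2 ξ₂ ξ₃) hD, ← div_mul_cancel₀ (D2 ξ₃ ξ₁) hD,
        ← div_mul_cancel₀ (D2 ξ₁ ξ₂) hD]
      linear_combination (-(Dsum * E)) * hsum
    obtain ⟨γ, h₁, h₂, h₃⟩ := exists_dotp2_eq_of_sum_D2_mul_eq_zero hD hg
    exact ⟨γ, by simp only [F, h₁, h₂, h₃, sub_sub_cancel, max_self]⟩
  · rintro _ ⟨γ, rfl⟩
    exact weighted_sum_le_max_sub_dotp2 hp₁ hp₂ hp₃ hsum hcomb f₁ f₂ f₃ γ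
end
end

section
/- Let ξ₁,…,ξ_k be nonzero vectors in ℝ², ordered anticlockwise, satisfying: (i) no two of the vectors are linearly dependent; (ii) there is no ω ∈ ℝ² with ⟨ω,ξᵢ⟩ > 0 for all i. Then for any real numbers f(ξ₁),…,f(ξ_k), min_{γ∈ℝ²} max_{i=1,…,k} [f(ξᵢ) − ⟨ξᵢ,γ⟩] = max_{(i,j,m)} (pᵢ^{ijm} f(ξᵢ) + p_j^{ijm} f(ξ_j) + p_m^{ijm} f(ξ_m)), where the maximum is taken over all triples 1 ≤ i < j < m ≤ k such that the origin lies in the interior of conv{ξᵢ,ξ_j,ξ_m}, and {pᵢ^{ijm}, p_j^{ijm}, p_m^{ijm}} is the unique risk-neutral probability law on {ξᵢ, ξ_j, ξ_m}. -/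
/-!
The minimised maximal hedging loss `g γ = maxᵢ (f ξᵢ - ⟨ξᵢ, γ⟩)` dominates every risk-neutral
price, since pairing `Σ pᵢ ξᵢ = 0` with `γ` gives `Σ pᵢ f ξᵢ ≤ g γ`. Conversely, (i) and (ii)
force every direction `u ≠ 0` to have some `⟨ξᵢ, u⟩ > 0`, so `g` grows linearly at infinity and
attains its minimum at some `γ₀`. If the origin were not in the convex hull of the vectors active
at `γ₀`, a separating functional would give a direction of descent. Hence it is, and Carathéodory
writes the origin as a positive combination of at most three active vectors. By (i) and `ξᵢ ≠ 0`
there are exactly three, the origin is interior to their triangle, and their risk-neutral price is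
`g γ₀`.
-/

noncomputable section

open Finset Matrix Filter Topology

lemma dotp2_eq_dotProduct (u v : Fin 2 → ℝ) : dotp2 u v = u ⬝ᵥ v := by
  simp [dotp2, dotProduct, Fin.sum_univ_two]

lemma continuous_ciSup_of_fintype {ι X : Type*} [Fintype ι] [Nonempty ι] [TopologicalSpace X]
    {g : ι → X → ℝ} (hg : ∀ i, Continuous (g i)) : Continuous fun x => ⨆ i, g i x := by
  simp_rw [← Finset.sup'_univ_eq_ciSup]
  exact Continuous.finset_sup'_apply univ_nonempty fun i _ => hg i

lemma eventually_sub_mul_lt_nhdsGT {a b c : ℝ} (ha : a ≤ c) (hb : a = c → 0 < b) :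
    ∀ᶠ t in 𝓝[>] 0, a - t * b < c := by
  rcases ha.eq_or_lt with rfl | hlt
  · filter_upwards [self_mem_nhdsWithin] with t (ht : 0 < t)
    linarith [mul_pos ht (hb rfl)]
  · refine eventually_nhdsWithin_of_eventually_nhds ?_
    exact (by fun_prop : Continuous fun t : ℝ => a - t * b).continuousAt.eventually_lt
      continuousAt_const (by simpa using hlt)

lemma LinearIndependent.eq_zero_of_forall_dotProduct_eq_zero {ι σ : Type*} [Fintype ι]
    [Fintype σ] {b : ι → σ → ℝ} (hb : LinearIndependent ℝ b)
    (hcard : Fintype.card ι = Fintype.card σ) {u : σ → ℝ} (hu : ∀ i, b i ⬝ᵥ u = 0) : u = 0 := by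
  have hspan := hb.span_eq_top_of_card_eq_finrank' (by simpa using hcard)
  have horth : ∀ v ∈ Submodule.span ℝ (Set.range b), v ⬝ᵥ u = 0 := fun v hv => by
    induction hv using Submodule.span_induction with
    | mem x hx => obtain ⟨i, rfl⟩ := hx; exact hu i
    | zero => exact zero_dotProduct u
    | add x y _ _ hx hy => rw [add_dotProduct, hx, hy, add_zero]
    | smul a x _ hx => rw [smul_dotProduct, hx, smul_zero]
  exact dotProduct_self_eq_zero.1 (horth u (hspan ▸ Submodule.mem_top))

lemma not_linearIndependent_of_dotProduct_eq_zero {x y u : Fin 2 → ℝ} (hu : u ≠ 0)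
    (hx : x ⬝ᵥ u = 0) (hy : y ⬝ᵥ u = 0) : ¬ LinearIndependent ℝ ![x, y] := fun h =>
  hu (h.eq_zero_of_forall_dotProduct_eq_zero (by simp) (Fin.forall_fin_two.2 ⟨hx, hy⟩))

section DotProduct

variable {ι σ : Type*} [Fintype ι] [Fintype σ] (ξ : ι → σ → ℝ)

lemma exists_forall_dotProduct_pos_of_nonpos {u ω₀ : σ → ℝ} (hu : ∀ i, ξ i ⬝ᵥ u ≤ 0)
    (hω₀ : ∀ i, ξ i ⬝ᵥ u = 0 → 0 < ξ i ⬝ᵥ ω₀) : ∃ ω, ∀ i, 0 < ω ⬝ᵥ ξ i := by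
  have hev : ∀ᶠ t in 𝓝[>] (0 : ℝ), ∀ i, 0 < (t • ω₀ - u) ⬝ᵥ ξ i := by
    refine eventually_all.2 fun i => ?_
    filter_upwards [eventually_sub_mul_lt_nhdsGT (hu i) (hω₀ i)] with t ht
    rw [sub_dotProduct, smul_dotProduct, smul_eq_mul, dotProduct_comm ω₀, dotProduct_comm u]
    linarith
  obtain ⟨t, ht⟩ := hev.exists
  exact ⟨_, ht⟩

lemma exists_pos_mul_norm_le_ciSup_dotProduct [Nonempty ι] [Nonempty σ]
    (hpos : ∀ u ≠ 0, ∃ i, 0 < ξ i ⬝ᵥ u) : ∃ c > 0, ∀ v, c * ‖v‖ ≤ ⨆ i, ξ i ⬝ᵥ v := by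
  set m : (σ → ℝ) → ℝ := fun v => ⨆ i, ξ i ⬝ᵥ v
  have hm : Continuous m :=
    continuous_ciSup_of_fintype fun i => continuous_const.dotProduct continuous_id
  obtain ⟨u₀, hu₀, hmin⟩ := (isCompact_sphere (0 : σ → ℝ) 1).exists_isMinOn
    (NormedSpace.sphere_nonempty.2 zero_le_one) hm.continuousOn
  obtain ⟨i₀, hi₀⟩ := hpos u₀ (ne_zero_of_mem_unit_sphere ⟨u₀, hu₀⟩)
  have hc : 0 < m u₀ :=
    hi₀.trans_le (le_ciSup (f := fun i => ξ i ⬝ᵥ u₀) (Finite.bddAbove_range _) i₀)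
  refine ⟨m u₀, hc, fun v => ?_⟩
  rcases eq_or_ne v 0 with rfl | hv
  · simp [m]
  have hnv : 0 < ‖v‖ := norm_pos_iff.2 hv
  have hunit : ‖v‖⁻¹ • v ∈ Metric.sphere 0 1 := by simp [norm_smul, hnv.ne']
  have hhom : m (‖v‖⁻¹ • v) = ‖v‖⁻¹ * m v := by
    simp only [m, dotProduct_smul, smul_eq_mul]
    rw [Real.mul_iSup_of_nonneg (inv_nonneg.2 hnv.le)]
  calc m u₀ * ‖v‖ ≤ m (‖v‖⁻¹ • v) * ‖v‖ := by gcongr; exact hmin hunit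
    _ = m v := by rw [hhom]; field_simp

def superhedgeCost (f : ι → ℝ) (γ : σ → ℝ) : ℝ := ⨆ i, (f i - ξ i ⬝ᵥ γ)

variable (f : ι → ℝ)

lemma le_superhedgeCost (γ : σ → ℝ) (i : ι) : f i - ξ i ⬝ᵥ γ ≤ superhedgeCost ξ f γ :=
  le_ciSup (f := fun i => f i - ξ i ⬝ᵥ γ) (Finite.bddAbove_range _) i

lemma exists_eq_superhedgeCost [Nonempty ι] (γ : σ → ℝ) :
    ∃ i, f i - ξ i ⬝ᵥ γ = superhedgeCost ξ f γ :=
  exists_eq_ciSup_of_finite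

lemma continuous_superhedgeCost [Nonempty ι] : Continuous (superhedgeCost ξ f) :=
  continuous_ciSup_of_fintype fun _ =>
    continuous_const.sub (continuous_const.dotProduct continuous_id)

lemma exists_forall_superhedgeCost_le [Nonempty ι] [Nonempty σ]
    (hpos : ∀ u ≠ 0, ∃ i, 0 < ξ i ⬝ᵥ u) :
    ∃ γ₀, ∀ γ, superhedgeCost ξ f γ₀ ≤ superhedgeCost ξ f γ := by
  obtain ⟨c, hc, hcoer⟩ := exists_pos_mul_norm_le_ciSup_dotProduct ξ hpos
  have hbound : ∀ γ, (⨅ i, f i) + c * ‖γ‖ ≤ superhedgeCost ξ f γ := fun γ => by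
    obtain ⟨i, hi⟩ := exists_eq_ciSup_of_finite (f := fun i => ξ i ⬝ᵥ -γ)
    have := hcoer (-γ)
    rw [norm_neg, ← hi, dotProduct_neg] at this
    linarith [ciInf_le (Finite.bddBelow_range f) i, le_superhedgeCost ξ f γ i]
  refine (continuous_superhedgeCost ξ f).exists_forall_le (tendsto_atTop_mono hbound ?_)
  exact tendsto_atTop_add_const_left _ _ (tendsto_norm_cocompact_atTop.const_mul_atTop hc)

lemma zero_mem_convexHull_of_forall_superhedgeCost_le [Nonempty ι] {γ₀ : σ → ℝ}
    (hγ₀ : ∀ γ, superhedgeCost ξ f γ₀ ≤ superhedgeCost ξ f γ) :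
    (0 : σ → ℝ) ∈ convexHull ℝ (ξ '' {i | f i - ξ i ⬝ᵥ γ₀ = superhedgeCost ξ f γ₀}) := by
  classical
  by_contra h0
  obtain ⟨ℓ, u, hℓ0, hℓ⟩ := geometric_hahn_banach_point_closed (convex_convexHull ℝ _)
    ((Set.toFinite _).isCompact_convexHull (𝕜 := ℝ)).isClosed h0
  rw [map_zero] at hℓ0
  set d : σ → ℝ := fun j => ℓ fun i => if j = i then 1 else 0
  have hd : ∀ x, x ⬝ᵥ d = ℓ x := fun x =>
    ((ℓ : (σ → ℝ) →ₗ[ℝ] ℝ).pi_apply_eq_sum_univ x).symm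
  have hdescent : ∀ᶠ t in 𝓝[>] (0 : ℝ),
      ∀ i, f i - ξ i ⬝ᵥ (γ₀ + t • d) < superhedgeCost ξ f γ₀ := by
    refine eventually_all.2 fun i => ?_
    filter_upwards [eventually_sub_mul_lt_nhdsGT (le_superhedgeCost ξ f γ₀ i)
      fun hi => hℓ0.trans (hℓ _ (subset_convexHull ℝ _ ⟨i, hi, rfl⟩))] with t ht
    rwa [dotProduct_add, dotProduct_smul, hd, smul_eq_mul, ← sub_sub]
  obtain ⟨t, ht⟩ := hdescent.exists
  obtain ⟨i, hi⟩ := exists_eq_superhedgeCost ξ f (γ₀ + t • d)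
  exact (hγ₀ _).not_gt (hi ▸ ht i)

end DotProduct

lemma sum_mul_eq_of_forall_sub_dotProduct_eq {ι κ σ : Type*} [Fintype κ] [Fintype σ]
    {ξ : ι → σ → ℝ} {f : ι → ℝ} {b : κ → ι} {γ : σ → ℝ} {c : ℝ}
    (hb : ∀ n, f (b n) - ξ (b n) ⬝ᵥ γ = c) {w : κ → ℝ} (hsum : ∑ n, w n = 1)
    (hcomb : ∑ n, w n • ξ (b n) = 0) : ∑ n, w n * f (b n) = c :=
  calc ∑ n, w n * f (b n) = ∑ n, w n * c + (∑ n, w n • ξ (b n)) ⬝ᵥ γ := by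
        simp only [sum_dotProduct, smul_dotProduct, smul_eq_mul, ← sum_add_distrib, ← mul_add]
        exact sum_congr rfl fun n _ => by rw [← hb n]; ring
    _ = c := by rw [← sum_mul, hsum, hcomb, zero_dotProduct, one_mul, add_zero]

lemma exists_dotProduct_pos_of_pairwise_linearIndependent {ι : Type*} [Fintype ι]
    {ξ : ι → Fin 2 → ℝ} (hne : ∀ i, ξ i ≠ 0)
    (hi : ∀ i j, i ≠ j → LinearIndependent ℝ ![ξ i, ξ j])
    (hii : ¬ ∃ ω : Fin 2 → ℝ, ∀ i, 0 < ω ⬝ᵥ ξ i) {u : Fin 2 → ℝ} (hu : u ≠ 0) :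
    ∃ i, 0 < ξ i ⬝ᵥ u := by
  by_contra! hnonpos
  by_cases h : ∀ a, ξ a ⬝ᵥ u ≠ 0
  · exact hii (exists_forall_dotProduct_pos_of_nonpos ξ hnonpos (ω₀ := 0) fun i hi0 =>
      absurd hi0 (h i))
  · obtain ⟨a, ha⟩ := not_forall_not.1 h
    refine hii (exists_forall_dotProduct_pos_of_nonpos ξ hnonpos (ω₀ := ξ a) fun i hi0 => ?_)
    obtain rfl : i = a := by_contra fun hia =>
      not_linearIndependent_of_dotProduct_eq_zero hu hi0 ha (hi i a hia)
    simpa using dotProduct_self_star_pos_iff.2 (hne i)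

lemma affineIndependent_of_linearIndependent_of_add_add_eq_zero {K E : Type*} [Field K]
    [AddCommGroup E] [Module K E] {x y z : E} (hxy : LinearIndependent K ![x, y]) {a b c : K}
    (hc : c ≠ 0) (habc : a + b + c ≠ 0) (h : a • x + b • y + c • z = 0) :
    AffineIndependent K ![x, y, z] := by
  rw [affineIndependent_iff_of_fintype]
  intro w hw0 hw
  rw [univ.weightedVSub_eq_linear_combination hw0, Fin.sum_univ_three] at hw
  rw [Fin.sum_univ_three] at hw0
  simp only [cons_val_zero, cons_val_one, Matrix.cons_val] at hw
  obtain ⟨h0, h1⟩ := LinearIndependent.pair_iff.1 hxy (c * w 0 - w 2 * a) (c * w 1 - w 2 * b)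
    (by
      calc _ = c • (w 0 • x + w 1 • y + w 2 • z) - w 2 • (a • x + b • y + c • z) := by module
        _ = 0 := by rw [hw, h, smul_zero, smul_zero, sub_zero])
  have h2 : w 2 = 0 := by
    have : w 2 * (a + b + c) = 0 := by linear_combination -h0 - h1 + c * hw0
    exact (mul_eq_zero.1 this).resolve_right habc
  have h01 : w 0 = 0 ∧ w 1 = 0 := by
    rw [h2, zero_mul, sub_zero] at h0 h1
    exact ⟨(mul_eq_zero.1 h0).resolve_left hc, (mul_eq_zero.1 h1).resolve_left hc⟩
  intro n
  fin_cases n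
  exacts [h01.1, h01.2, h2]

lemma AffineIndependent.sum_smul_mem_interior_convexHull {ι E : Type*} [Fintype ι]
    [NormedAddCommGroup E] [NormedSpace ℝ E] [FiniteDimensional ℝ E] {p : ι → E}
    (hp : AffineIndependent ℝ p) (hcard : Fintype.card ι = Module.finrank ℝ E + 1) {w : ι → ℝ}
    (hw : ∀ i, 0 < w i) (hsum : ∑ i, w i = 1) :
    ∑ i, w i • p i ∈ interior (convexHull ℝ (Set.range p)) := by
  let B : AffineBasis ι ℝ E := ⟨p, hp, hp.affineSpan_eq_top_iff_card_eq_finrank_add_one.2 hcard⟩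
  change ∑ i, w i • B i ∈ interior (convexHull ℝ (Set.range B))
  rw [B.interior_convexHull, ← univ.affineCombination_eq_linear_combination _ _ hsum]
  intro i
  rw [B.coord_apply_combination_of_mem (mem_univ i) hsum]
  exact hw i

lemma three_le_card_of_sum_smul_eq_zero {κ E : Type*} [Fintype κ] [AddCommGroup E]
    [Module ℝ E] {z : κ → E} (hne : ∀ t, z t ≠ 0)
    (hi : ∀ s t, s ≠ t → LinearIndependent ℝ ![z s, z t]) {w : κ → ℝ} (hw : ∀ t, 0 < w t)
    (hsum : ∑ t, w t = 1) (hz : ∑ t, w t • z t = 0) : 3 ≤ Fintype.card κ := by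
  by_contra! hcard
  interval_cases hk : Fintype.card κ
  · have : IsEmpty κ := Fintype.card_eq_zero_iff.1 hk
    simp at hsum
  · let e := (Fintype.equivFinOfCardEq hk).symm
    rw [← e.sum_comp, Fin.sum_univ_one] at hz
    exact hne _ ((smul_eq_zero.1 hz).resolve_left (hw _).ne')
  · let e := (Fintype.equivFinOfCardEq hk).symm
    rw [← e.sum_comp, Fin.sum_univ_two] at hz
    exact (hw _).ne' (LinearIndependent.pair_iff.1 (hi _ _ (e.injective.ne zero_ne_one)) _ _ hz).1

lemma exists_strictMono_triple_of_zero_mem_convexHull {ι : Type*} [LinearOrder ι]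
    {ξ : ι → Fin 2 → ℝ} (hne : ∀ i, ξ i ≠ 0)
    (hi : ∀ i j, i ≠ j → LinearIndependent ℝ ![ξ i, ξ j]) {S : Set ι}
    (h0 : (0 : Fin 2 → ℝ) ∈ convexHull ℝ (ξ '' S)) :
    ∃ b : Fin 3 → ι, StrictMono b ∧ (∀ n, b n ∈ S) ∧ ∃ w : Fin 3 → ℝ, (∀ n, 0 < w n) ∧
      ∑ n, w n = 1 ∧ ∑ n, w n • ξ (b n) = 0 := by
  obtain ⟨κ, _, z, w, hzS, hz, hw, hsum, hcomb⟩ := eq_pos_convex_span_of_mem_convexHull h0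
  choose a haS hξa using fun t => hzS (Set.mem_range_self t)
  obtain rfl : z = ξ ∘ a := funext fun t => (hξa t).symm
  have ha : Function.Injective a := hz.injective.of_comp
  have hcard : Fintype.card κ = 3 := by
    refine le_antisymm ?_ (three_le_card_of_sum_smul_eq_zero (fun t => hne (a t))
      (fun s t hst => hi _ _ (ha.ne hst)) hw hsum hcomb)
    simpa using hz.card_le_finrank_succ.trans (Nat.add_le_add_right (Submodule.finrank_le _) 1)
  let e := (Fintype.equivFinOfCardEq hcard).symm
  let σ := Tuple.sort (a ∘ e)
  refine ⟨a ∘ e ∘ σ, (Tuple.monotone_sort (a ∘ e)).strictMono_of_injective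
      (ha.comp (e.injective.comp σ.injective)), fun n => haS _, w ∘ e ∘ σ, fun n => hw _, ?_, ?_⟩
  · rw [← hsum]; exact (σ.trans e).sum_comp w
  · rw [← hcomb]; exact (σ.trans e).sum_comp fun t => w t • ξ (a t)

def riskNeutralTriplePrices {ι : Type*} [LinearOrder ι] (ξ : ι → Fin 2 → ℝ) (f : ι → ℝ) :
    Set ℝ :=
  { y : ℝ | ∃ i j m : ι, i < j ∧ j < m ∧
    (0 : Fin 2 → ℝ) ∈ interior (convexHull ℝ ({ξ i, ξ j, ξ m} : Set (Fin 2 → ℝ))) ∧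
    ∃ p₁ p₂ p₃ : ℝ, 0 ≤ p₁ ∧ 0 ≤ p₂ ∧ 0 ≤ p₃ ∧ p₁ + p₂ + p₃ = 1 ∧
      p₁ • ξ i + p₂ • ξ j + p₃ • ξ m = 0 ∧
      y = p₁ * f i + p₂ * f j + p₃ * f m }

section Triples

variable {ι : Type*} [LinearOrder ι] {ξ : ι → Fin 2 → ℝ} {f : ι → ℝ}

lemma sum_mem_riskNeutralTriplePrices (hi : ∀ i j, i ≠ j → LinearIndependent ℝ ![ξ i, ξ j])
    {b : Fin 3 → ι} (hb : StrictMono b) {w : Fin 3 → ℝ} (hw : ∀ n, 0 < w n)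
    (hsum : ∑ n, w n = 1) (hcomb : ∑ n, w n • ξ (b n) = 0) :
    ∑ n, w n * f (b n) ∈ riskNeutralTriplePrices ξ f := by
  rw [Fin.sum_univ_three] at hsum hcomb ⊢
  refine ⟨b 0, b 1, b 2, hb (by decide), hb (by decide), ?_, w 0, w 1, w 2, (hw 0).le,
    (hw 1).le, (hw 2).le, hsum, hcomb, rfl⟩
  have hAI := affineIndependent_of_linearIndependent_of_add_add_eq_zero
    (hi _ _ (hb.injective.ne (by decide))) (hw 2).ne' (hsum ▸ one_ne_zero) hcomb
  have := hAI.sum_smul_mem_interior_convexHull (by simp) (w := ![w 0, w 1, w 2])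
    (Fin.forall_fin_succ.2 ⟨hw 0, Fin.forall_fin_two.2 ⟨hw 1, hw 2⟩⟩)
    (by simpa [Fin.sum_univ_three] using hsum)
  rw [Fin.sum_univ_three, range_cons, range_cons, range_cons_empty, Set.singleton_union,
    Set.singleton_union] at this
  simpa only [cons_val_zero, cons_val_one, Matrix.cons_val, hcomb] using this

variable [Fintype ι]

lemma le_superhedgeCost_of_mem_riskNeutralTriplePrices {y : ℝ}
    (hy : y ∈ riskNeutralTriplePrices ξ f) (γ : Fin 2 → ℝ) : y ≤ superhedgeCost ξ f γ := by
  obtain ⟨i, j, m, -, -, -, p₁, p₂, p₃, hp₁, hp₂, hp₃, hsum, hcomb, rfl⟩ := hy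
  have hdot := congrArg (· ⬝ᵥ γ) hcomb
  simp only [add_dotProduct, smul_dotProduct, smul_eq_mul, zero_dotProduct] at hdot
  have h := le_superhedgeCost ξ f γ
  have hV : (p₁ + p₂ + p₃) * superhedgeCost ξ f γ = superhedgeCost ξ f γ := by rw [hsum, one_mul]
  linarith [mul_le_mul_of_nonneg_left (h i) hp₁, mul_le_mul_of_nonneg_left (h j) hp₂,
    mul_le_mul_of_nonneg_left (h m) hp₃]

lemma superhedgeCost_mem_riskNeutralTriplePrices [Nonempty ι] (hne : ∀ i, ξ i ≠ 0)
    (hi : ∀ i j, i ≠ j → LinearIndependent ℝ ![ξ i, ξ j]) {γ₀ : Fin 2 → ℝ}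
    (hγ₀ : ∀ γ, superhedgeCost ξ f γ₀ ≤ superhedgeCost ξ f γ) :
    superhedgeCost ξ f γ₀ ∈ riskNeutralTriplePrices ξ f := by
  obtain ⟨b, hb, hbS, w, hw, hsum, hcomb⟩ := exists_strictMono_triple_of_zero_mem_convexHull hne
    hi (zero_mem_convexHull_of_forall_superhedgeCost_le ξ f hγ₀)
  rw [← sum_mul_eq_of_forall_sub_dotProduct_eq hbS hsum hcomb]
  exact sum_mem_riskNeutralTriplePrices hi hb hw hsum hcomb

end Triples

theorem stmt2_general (k : ℕ) (ξ : Fin k → (Fin 2 → ℝ)) (f : Fin k → ℝ)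
    (hne : ∀ i, ξ i ≠ 0)
    -- (i): no two of the vectors are linearly dependent
    (hi : ∀ i j : Fin k, i ≠ j → LinearIndependent ℝ ![ξ i, ξ j])
    -- (ii): no ω has positive inner product with all the ξᵢ
    (hii : ¬ ∃ ω : Fin 2 → ℝ, ∀ i, 0 < dotp2 ω (ξ i)) :
    ∃ V : ℝ,
      IsLeast (Set.range fun γ : Fin 2 → ℝ => ⨆ i, (f i - dotp2 (ξ i) γ)) V ∧
      IsGreatest { y : ℝ | ∃ i j m : Fin k, i < j ∧ j < m ∧
        (0 : Fin 2 → ℝ) ∈ interior (convexHull ℝ ({ξ i, ξ j, ξ m} : Set (Fin 2 → ℝ))) ∧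
        ∃ p₁ p₂ p₃ : ℝ, 0 ≤ p₁ ∧ 0 ≤ p₂ ∧ 0 ≤ p₃ ∧ p₁ + p₂ + p₃ = 1 ∧
          p₁ • ξ i + p₂ • ξ j + p₃ • ξ m = 0 ∧
          y = p₁ * f i + p₂ * f j + p₃ * f m } V := by
  simp only [dotp2_eq_dotProduct] at hii ⊢
  have : Nonempty (Fin k) := by
    by_contra h
    exact hii ⟨0, fun i => (not_nonempty_iff.1 h).elim i⟩
  obtain ⟨γ₀, hγ₀⟩ := exists_forall_superhedgeCost_le ξ f fun _ hu =>
    exists_dotProduct_pos_of_pairwise_linearIndependent hne hi hii hu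
  refine ⟨superhedgeCost ξ f γ₀, ⟨⟨γ₀, rfl⟩, ?_⟩,
    superhedgeCost_mem_riskNeutralTriplePrices hne hi hγ₀,
    fun _ hy => le_superhedgeCost_of_mem_riskNeutralTriplePrices hy γ₀⟩
  rintro _ ⟨γ, rfl⟩
  exact hγ₀ γ

theorem stmt2 (k : ℕ) (ξ : Fin k → (Fin 2 → ℝ)) (f : Fin k → ℝ)
    (hne : ∀ i, ξ i ≠ 0)
    -- the vectors are ordered anticlockwise: their polar angles are strictly
    -- increasing within one full turn
    (hord : ∃ (θ : Fin k → ℝ) (r : Fin k → ℝ), (∀ i, 0 < r i) ∧ StrictMono θ ∧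
      (∀ i j, θ j < θ i + 2 * Real.pi) ∧
      ∀ i, ξ i = r i • ![Real.cos (θ i), Real.sin (θ i)])
    -- (i): no two of the vectors are linearly dependent
    (hi : ∀ i j : Fin k, i ≠ j → LinearIndependent ℝ ![ξ i, ξ j])
    -- (ii): no ω has positive inner product with all the ξᵢ
    (hii : ¬ ∃ ω : Fin 2 → ℝ, ∀ i, 0 < dotp2 ω (ξ i)) :
    ∃ V : ℝ,
      IsLeast (Set.range fun γ : Fin 2 → ℝ => ⨆ i, (f i - dotp2 (ξ i) γ)) V ∧
      IsGreatest { y : ℝ | ∃ i j m : Fin k, i < j ∧ j < m ∧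
        (0 : Fin 2 → ℝ) ∈ interior (convexHull ℝ ({ξ i, ξ j, ξ m} : Set (Fin 2 → ℝ))) ∧
        ∃ p₁ p₂ p₃ : ℝ, 0 ≤ p₁ ∧ 0 ≤ p₂ ∧ 0 ≤ p₃ ∧ p₁ + p₂ + p₃ = 1 ∧
          p₁ • ξ i + p₂ • ξ j + p₃ • ξ m = 0 ∧
          y = p₁ * f i + p₂ * f j + p₃ * f m } V :=
  stmt2_general k ξ f hne hi hii
end
end

section
/- Let ξ₁,…,ξ_{d+1} be vectors in ℝ^d such that the origin lies in the interior of their convex hull Π[ξ₁,…,ξ_{d+1}], ordered so that (ξ₂,…,ξ_{d+1}) is a positively oriented basis of ℝ^d, and let f(ξ₁),…,f(ξ_{d+1}) be arbitrary real numbers. Set D = Σ_{i=1}^{d+1} (−1)^{i−1} D({ξ̂ᵢ}), where {ξ̂ᵢ} is the ordered family obtained by removing ξᵢ. Then min_{γ∈ℝ^d} max_{i} [f(ξᵢ) − ⟨ξᵢ,γ⟩] = (1/D) Σ_{i=1}^{d+1} f(ξᵢ)(−1)^{i+1} D({ξ̂ᵢ}), and the minimum is attained at the unique point γ₀ = −(1/D)[f(ξ₁)R̃({ξ̂₁})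 − f(ξ₂)R̃({ξ̂₂}) + ⋯ + (−1)^d f(ξ_{d+1})R̃({ξ̂_{d+1}})], which is the unique solution of the linear system ⟨ξᵢ − ξ₁, γ⟩ = f(ξᵢ) − f(ξ₁), i = 2,…,d+1. -/
noncomputable section

/-- Standard inner product on ℝ^d. -/
def dotp {d : ℕ} (u v : Fin d → ℝ) : ℝ := ∑ i, u i * v i

/-- Oriented volume `D(u₁,…,u_d)`: determinant of the matrix with rows `u₁,…,u_d`. -/
def mdet {d : ℕ} (u : Fin d → (Fin d → ℝ)) : ℝ := Matrix.det (Matrix.of u)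

/-- The rotor `R(v₁,…,v_m)` of `m` vectors in ℝ^{m+1}: the formal determinant whose first
row consists of the standard basis vectors and whose remaining rows are `v₁,…,v_m`. -/
def rotor {m : ℕ} (v : Fin m → (Fin (m + 1) → ℝ)) : Fin (m + 1) → ℝ :=
  fun j => Matrix.det (Matrix.of (Fin.cons (fun l => if l = j then (1 : ℝ) else 0) v))

/-- `R̃(u₁,…,u_{m+1}) = R(u₂ - u₁, …, u_{m+1} - u₁)`. -/
def tildeR {m : ℕ} (u : Fin (m + 1) → (Fin (m + 1) → ℝ)) : Fin (m + 1) → ℝ :=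
  rotor (fun i : Fin m => u i.succ - u 0)

/-!
Write `homDet q` for the determinant with rows `(1, q m)`. Expanding `homDet ξ` along its first
column gives `D`, and expanding `homDet (x, ξ̂ⱼ)` along its first row gives
`⟨x, R̃(ξ̂ⱼ)⟩ = D(ξ̂ⱼ) - homDet (x, ξ̂ⱼ)`. For `x = ξᵢ` the last determinant has a repeated row
when `i ≠ j`, and is `(-1)^i D` when `i = j`. Hence `⟨ξᵢ, γ₀⟩ = f(ξᵢ) - V` for every `i`: all the
affine functions `f(ξᵢ) - ⟨ξᵢ, γ⟩` take the value `V` at `γ₀`.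

Since `0` is interior to the convex hull, a linear functional that is nonnegative at every `ξᵢ`
vanishes. If `F γ ≤ V` then `⟨ξᵢ, γ - γ₀⟩ ≥ 0` for all `i`, so `γ = γ₀`: this gives both the
minimality of `V` and the uniqueness of the minimizer. The same fact, applied to a kernel vector
of the rows `ξᵢ - ξ₀`, shows `D ≠ 0`, which makes the linear system uniquely solvable.
-/

open Matrix

def homDet {n : ℕ} (q : Fin (n + 1) → (Fin n → ℝ)) : ℝ :=
  det (of fun m => Fin.cons 1 (q m) : Matrix (Fin (n + 1)) (Fin (n + 1)) ℝ)

theorem dotp_eq_dotProduct {n : ℕ} (u v : Fin n → ℝ) : dotp u v = u ⬝ᵥ v := rfl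

theorem rotor_apply {m : ℕ} (v : Fin m → (Fin (m + 1) → ℝ)) (j : Fin (m + 1)) :
    rotor v j = (-1) ^ (j : ℕ) * det (of fun k => v k ∘ j.succAbove) := by
  rw [rotor, det_succ_row_zero, Finset.sum_eq_single j]
  · simp only [of_apply, Fin.cons_zero, ↓reduceIte, mul_one]; rfl
  · intro l _ hl; simp [hl]
  · simp

theorem homDet_eq_sum {n : ℕ} (q : Fin (n + 2) → (Fin (n + 1) → ℝ)) :
    homDet q = ∑ i : Fin (n + 2), (-1) ^ (i : ℕ) * mdet (fun k => q (i.succAbove k)) := by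
  rw [homDet, det_succ_column_zero]
  simp only [of_apply, Fin.cons_zero, mul_one]; rfl

theorem homDet_eq_mdet_sub {n : ℕ} (q : Fin (n + 1) → (Fin n → ℝ)) :
    homDet q = mdet (fun k => q k.succ - q 0) := by
  have hrow : homDet q = det (of (Fin.cons (Fin.cons 1 (q 0))
      fun k => Fin.cons 0 (q k.succ - q 0)) : Matrix (Fin (n + 1)) (Fin (n + 1)) ℝ) := by
    refine det_eq_of_forall_row_eq_smul_add_const (Fin.cases 0 fun _ => 1) 0 rfl fun i j => ?_
    cases i using Fin.cases <;> cases j using Fin.cases <;> simp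
  rw [hrow, det_succ_column_zero, Fin.sum_univ_succ]
  simp only [of_apply, Fin.cons_zero, Fin.cons_succ, Fin.succAbove_zero, Fin.val_zero, pow_zero,
    one_mul, mul_zero, zero_mul, Finset.sum_const_zero, add_zero, mdet]
  rfl

theorem homDet_cons_of_mem {n : ℕ} (w : Fin n → (Fin n → ℝ)) (a : Fin n) :
    homDet (Fin.cons (w a) w) = 0 :=
  det_zero_of_row_eq (Fin.succ_ne_zero a).symm rfl

theorem homDet_cons_succAbove {n : ℕ} (q : Fin (n + 1) → (Fin n → ℝ)) (i : Fin (n + 1)) :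
    homDet (Fin.cons (q i) fun k => q (i.succAbove k)) = (-1) ^ (i : ℕ) * homDet q := by
  have hperm : (Fin.cons (q i) fun k => q (i.succAbove k) : Fin (n + 1) → _) =
      q ∘ i.cycleRange.symm := by
    funext m
    cases m using Fin.cases <;> simp [Fin.cycleRange_symm_zero, Fin.cycleRange_symm_succ]
  rw [hperm, homDet, homDet]
  change det ((of fun m => Fin.cons 1 (q m) : Matrix (Fin (n + 1)) (Fin (n + 1)) ℝ).submatrix
    i.cycleRange.symm id) = _
  rw [det_permute, Equiv.Perm.sign_symm, Fin.sign_cycleRange]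
  push_cast
  rfl

theorem dotProduct_tildeR {n : ℕ} (x : Fin (n + 1) → ℝ) (w : Fin (n + 1) → (Fin (n + 1) → ℝ)) :
    x ⬝ᵥ tildeR w = mdet w - homDet (Fin.cons x w) := by
  have hminor : ∀ l : Fin (n + 1),
      det ((of fun m => Fin.cons 1 ((Fin.cons x w : Fin (n + 2) → _) m) :
        Matrix (Fin (n + 2)) (Fin (n + 2)) ℝ).submatrix Fin.succ l.succ.succAbove) =
        det (of fun k => (w k.succ - w 0) ∘ l.succAbove) := by
    intro l
    refine .trans (congrArg det ?_) (homDet_eq_mdet_sub fun k => w k ∘ l.succAbove)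
    ext k c
    cases c using Fin.cases <;> simp
  have hminor_zero : (of fun m => Fin.cons 1 ((Fin.cons x w : Fin (n + 2) → _) m) :
      Matrix (Fin (n + 2)) (Fin (n + 2)) ℝ).submatrix Fin.succ Fin.succ = of w := by
    ext; simp
  rw [homDet, det_succ_row_zero, Fin.sum_univ_succ]
  simp only [of_apply, Fin.cons_zero, Fin.cons_succ, Fin.val_zero, Fin.val_succ, pow_zero,
    one_mul, Fin.succAbove_zero, hminor_zero, hminor]
  rw [mdet, sub_add_cancel_left, ← Finset.sum_neg_distrib, dotProduct]
  refine Finset.sum_congr rfl fun l _ => ?_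
  rw [tildeR, rotor_apply]
  ring

theorem dotProduct_tildeR_succAbove {n : ℕ} (ξ : Fin (n + 2) → (Fin (n + 1) → ℝ))
    (i j : Fin (n + 2)) :
    ξ i ⬝ᵥ tildeR (fun k => ξ (j.succAbove k)) =
      mdet (fun k => ξ (j.succAbove k)) - if i = j then (-1) ^ (i : ℕ) * homDet ξ else 0 := by
  rw [dotProduct_tildeR]
  split_ifs with h
  · rw [h, homDet_cons_succAbove]
  · obtain ⟨a, rfl⟩ := Fin.exists_succAbove_eq h
    rw [homDet_cons_of_mem (fun k => ξ (j.succAbove k)) a, sub_zero]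

theorem dotProduct_sum_tildeR {n : ℕ} (ξ : Fin (n + 2) → (Fin (n + 1) → ℝ))
    (f : Fin (n + 2) → ℝ) (i : Fin (n + 2)) :
    ξ i ⬝ᵥ ∑ j : Fin (n + 2), ((-1) ^ (j : ℕ) * f j) • tildeR (fun k => ξ (j.succAbove k)) =
      ∑ j : Fin (n + 2), (-1) ^ (j : ℕ) * f j * mdet (fun k => ξ (j.succAbove k)) -
        f i * homDet ξ := by
  simp only [dotProduct_sum, dotProduct_smul, dotProduct_tildeR_succAbove, smul_eq_mul, mul_sub,
    Finset.sum_sub_distrib, mul_ite, mul_zero, Finset.sum_ite_eq, Finset.mem_univ, if_true]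
  have hsign : ((-1 : ℝ) ^ (i : ℕ)) * (-1) ^ (i : ℕ) = 1 := by
    rw [← pow_add, Even.neg_one_pow ⟨_, rfl⟩]
  linear_combination -(f i * homDet ξ) * hsign

theorem LinearMap.eq_zero_of_nonneg_of_zero_mem_interior_convexHull {E : Type*}
    [AddCommGroup E] [Module ℝ E] [TopologicalSpace E] [ContinuousSMul ℝ E] {s : Set E}
    (h0 : (0 : E) ∈ interior (convexHull ℝ s)) {ℓ : E →ₗ[ℝ] ℝ} (hℓ : ∀ x ∈ s, 0 ≤ ℓ x) :
    ℓ = 0 := by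
  have hhull : ∀ x ∈ convexHull ℝ s, 0 ≤ ℓ x := fun x hx =>
    convexHull_min hℓ (convex_halfSpace_ge ℓ.isLinear 0) hx
  ext v
  have hmin : IsLocalMin (fun t : ℝ => t * ℓ v) 0 := by
    have hsmul : Filter.Tendsto (fun t : ℝ => t • v) (nhds 0) (nhds 0) :=
      (continuous_id.smul continuous_const).tendsto' 0 0 (zero_smul ℝ v)
    filter_upwards [hsmul (mem_interior_iff_mem_nhds.1 h0)] with t ht
    simpa using hhull _ ht
  simpa using hmin.hasDerivAt_eq_zero (hasDerivAt_mul_const (ℓ v))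

theorem eq_zero_of_forall_dotProduct_nonneg {ι : Type*} {n : ℕ} {ξ : ι → (Fin n → ℝ)}
    (hin : 0 ∈ interior (convexHull ℝ (Set.range ξ))) {w : Fin n → ℝ}
    (hw : ∀ i, 0 ≤ ξ i ⬝ᵥ w) : w = 0 := by
  have hℓ := LinearMap.eq_zero_of_nonneg_of_zero_mem_interior_convexHull hin
    (ℓ := (dotProductBilin ℝ ℝ).flip w) (by rintro _ ⟨i, rfl⟩; exact hw i)
  simpa using LinearMap.congr_fun hℓ w

theorem mdet_sub_ne_zero {n : ℕ} {ξ : Fin (n + 1) → (Fin n → ℝ)}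
    (hin : 0 ∈ interior (convexHull ℝ (Set.range ξ))) : mdet (fun k => ξ k.succ - ξ 0) ≠ 0 := by
  intro h
  obtain ⟨w, hw0, hw⟩ := exists_mulVec_eq_zero_iff.2 h
  have hconst : ∀ i, ξ i ⬝ᵥ w = ξ 0 ⬝ᵥ w := by
    refine Fin.cases rfl fun k => ?_
    have hk : (ξ k.succ - ξ 0) ⬝ᵥ w = 0 := congrFun hw k
    rwa [sub_dotProduct, sub_eq_zero] at hk
  rcases le_total 0 (ξ 0 ⬝ᵥ w) with hpos | hneg
  · exact hw0 (eq_zero_of_forall_dotProduct_nonneg hin fun i => hconst i ▸ hpos)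
  · refine hw0 (neg_eq_zero.1 (eq_zero_of_forall_dotProduct_nonneg hin fun i => ?_))
    rw [dotProduct_neg, hconst i]
    linarith

theorem stmt3_general (d : ℕ) (ξ : Fin (d + 2) → (Fin (d + 1) → ℝ))
    (hin : (0 : Fin (d + 1) → ℝ) ∈ interior (convexHull ℝ (Set.range ξ)))
    (f : Fin (d + 2) → ℝ) :
    let hat : Fin (d + 2) → Fin (d + 1) → (Fin (d + 1) → ℝ) :=
      fun i j => ξ (i.succAbove j)
    let D : ℝ := ∑ i : Fin (d + 2), (-1 : ℝ) ^ (i : ℕ) * mdet (hat i)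
    let V : ℝ := (1 / D) * ∑ i : Fin (d + 2), (-1 : ℝ) ^ (i : ℕ) * f i * mdet (hat i)
    let γ₀ : Fin (d + 1) → ℝ :=
      (-(1 / D)) • ∑ i : Fin (d + 2), ((-1 : ℝ) ^ (i : ℕ) * f i) • tildeR (hat i)
    let F : (Fin (d + 1) → ℝ) → ℝ := fun γ => ⨆ i, (f i - dotp (ξ i) γ)
    IsLeast (Set.range F) V ∧ F γ₀ = V ∧ (∀ γ, F γ = V → γ = γ₀) ∧
      (∀ j : Fin (d + 1), dotp (ξ j.succ - ξ 0) γ₀ = f j.succ - f 0) ∧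
      (∀ γ, (∀ j : Fin (d + 1), dotp (ξ j.succ - ξ 0) γ = f j.succ - f 0) → γ = γ₀) := by
  intro hat D V γ₀ F
  simp only [dotp_eq_dotProduct]
  have hD : homDet ξ = D := homDet_eq_sum ξ
  have hdet : mdet (fun k => ξ k.succ - ξ 0) ≠ 0 := mdet_sub_ne_zero hin
  have hD0 : D ≠ 0 := by rwa [← hD, homDet_eq_mdet_sub]
  have hval : ∀ i, ξ i ⬝ᵥ γ₀ = f i - V := by
    intro i
    rw [dotProduct_smul, dotProduct_sum_tildeR, hD, smul_eq_mul]
    linear_combination f i * one_div_mul_cancel hD0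
  have hFγ₀ : F γ₀ = V := by simp [F, dotp_eq_dotProduct, hval]
  have hle : ∀ γ, F γ ≤ V → γ = γ₀ := by
    intro γ hγ
    refine sub_eq_zero.1 (eq_zero_of_forall_dotProduct_nonneg hin fun i => ?_)
    have hi : f i - ξ i ⬝ᵥ γ ≤ V := (le_ciSup (Set.finite_range _).bddAbove i).trans hγ
    linarith [dotProduct_sub (ξ i) γ γ₀, hval i]
  have hsys : ∀ j : Fin (d + 1), (ξ j.succ - ξ 0) ⬝ᵥ γ₀ = f j.succ - f 0 := fun j => by
    rw [sub_dotProduct, hval, hval]; ring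
  refine ⟨⟨⟨γ₀, hFγ₀⟩, ?_⟩, hFγ₀, fun γ hγ => hle γ hγ.le, hsys, fun γ hγ => ?_⟩
  · rintro _ ⟨γ, rfl⟩
    by_contra! hlt
    exact hlt.ne (hle γ hlt.le ▸ hFγ₀)
  · refine sub_eq_zero.1 (eq_zero_of_mulVec_eq_zero hdet (funext fun j => ?_))
    change (ξ j.succ - ξ 0) ⬝ᵥ (γ - γ₀) = 0
    rw [dotProduct_sub, hγ, hsys, sub_self]

theorem stmt3 (d : ℕ) (ξ : Fin (d + 2) → (Fin (d + 1) → ℝ))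
    (hin : (0 : Fin (d + 1) → ℝ) ∈ interior (convexHull ℝ (Set.range ξ)))
    -- (ξ₂, …, ξ_{d+1}) is a positively oriented basis
    (hor : 0 < mdet (fun j : Fin (d + 1) => ξ j.succ))
    (f : Fin (d + 2) → ℝ) :
    let hat : Fin (d + 2) → Fin (d + 1) → (Fin (d + 1) → ℝ) :=
      fun i j => ξ (i.succAbove j)
    let D : ℝ := ∑ i : Fin (d + 2), (-1 : ℝ) ^ (i : ℕ) * mdet (hat i)
    let V : ℝ := (1 / D) * ∑ i : Fin (d + 2), (-1 : ℝ) ^ (i : ℕ) * f i * mdet (hat i)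
    let γ₀ : Fin (d + 1) → ℝ :=
      (-(1 / D)) • ∑ i : Fin (d + 2), ((-1 : ℝ) ^ (i : ℕ) * f i) • tildeR (hat i)
    let F : (Fin (d + 1) → ℝ) → ℝ := fun γ => ⨆ i, (f i - dotp (ξ i) γ)
    IsLeast (Set.range F) V ∧ F γ₀ = V ∧ (∀ γ, F γ = V → γ = γ₀) ∧
      (∀ j : Fin (d + 1), dotp (ξ j.succ - ξ 0) γ₀ = f j.succ - f 0) ∧
      (∀ γ, (∀ j : Fin (d + 1), dotp (ξ j.succ - ξ 0) γ = f j.succ - f 0) → γ = γ₀) :=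
  stmt3_general d ξ hin f
end
end

section
/- Let ξ₁,…,ξ_{d+1} be vectors in ℝ^d whose convex hull contains the origin in its interior, let f(ξ₁),…,f(ξ_{d+1}) be real numbers, let V = min_{γ∈ℝ^d} max_i [f(ξᵢ) − ⟨ξᵢ,γ⟩], and let γ₀ be the unique minimizer. Then |V| ≤ max_i |f(ξᵢ)| and |γ₀| ≤ (max_i |f(ξᵢ)|) · max_{i=1,…,d+1} hᵢ^{−1}, where hᵢ is the distance from the origin to the affine hyperplane passing through the points {ξ_j : j ≠ i}. -/
noncomputable section

/-- Euclidean norm on ℝ^d. -/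
def euclNorm {d : ℕ} (u : Fin d → ℝ) : ℝ := Real.sqrt (∑ i, (u i) ^ 2)

/-- Euclidean distance from the origin to the affine subspace spanned by the set `s`. -/
def distOrigAffine {d : ℕ} (s : Set (Fin d → ℝ)) : ℝ :=
  sInf (euclNorm '' (affineSpan ℝ s : Set (Fin d → ℝ)))

namespace Stmt5Aux

variable {n : ℕ}

lemma dotp_zero_right (u : Fin n → ℝ) : dotp u 0 = 0 := by simp [dotp]

lemma dotp_zero_left (u : Fin n → ℝ) : dotp 0 u = 0 := by simp [dotp]

lemma dotp_add_right (u v w : Fin n → ℝ) : dotp u (v + w) = dotp u v + dotp u w := by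
  simp [dotp, mul_add, Finset.sum_add_distrib]

lemma dotp_smul_right (u : Fin n → ℝ) (r : ℝ) (v : Fin n → ℝ) :
    dotp u (r • v) = r * dotp u v := by
  simp [dotp, Finset.mul_sum, mul_left_comm]

lemma dotp_smul_left (r : ℝ) (u v : Fin n → ℝ) : dotp (r • u) v = r * dotp u v := by
  simp [dotp, Finset.mul_sum, mul_assoc]

lemma dotp_sum_left {ι : Type*} (s : Finset ι) (w : ι → ℝ) (p : ι → Fin n → ℝ)
    (v : Fin n → ℝ) : dotp (∑ i ∈ s, w i • p i) v = ∑ i ∈ s, w i * dotp (p i) v := by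
  simp only [dotp, Finset.mul_sum]
  rw [Finset.sum_comm]
  refine Finset.sum_congr rfl fun j _ => ?_
  simp [Finset.sum_mul, mul_assoc]

lemma euclNorm_nonneg (u : Fin n → ℝ) : 0 ≤ euclNorm u := Real.sqrt_nonneg _

lemma abs_le_euclNorm (u : Fin n → ℝ) (i : Fin n) : |u i| ≤ euclNorm u := by
  rw [euclNorm, ← Real.sqrt_sq_eq_abs]
  exact Real.sqrt_le_sqrt (Finset.single_le_sum (fun j _ => sq_nonneg (u j))
    (Finset.mem_univ i))

lemma euclNorm_smul (r : ℝ) (u : Fin n → ℝ) : euclNorm (r • u) = |r| * euclNorm u := by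
  simp only [euclNorm, Pi.smul_apply, smul_eq_mul, mul_pow]
  rw [← Finset.mul_sum, Real.sqrt_mul (sq_nonneg r), Real.sqrt_sq_eq_abs]

lemma euclNorm_zero : euclNorm (0 : Fin n → ℝ) = 0 := by simp [euclNorm]

lemma euclNorm_pos {u : Fin n → ℝ} (h : u ≠ 0) : 0 < euclNorm u := by
  rcases Function.ne_iff.mp h with ⟨i, hi⟩
  have : (0 : ℝ) < u i ^ 2 := lt_of_le_of_ne (sq_nonneg _) (Ne.symm (pow_ne_zero 2 hi))
  exact Real.sqrt_pos.mpr (lt_of_lt_of_le this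
    (Finset.single_le_sum (fun j _ => sq_nonneg (u j)) (Finset.mem_univ i)))

lemma dotp_self (u : Fin n → ℝ) : dotp u u = euclNorm u ^ 2 := by
  rw [euclNorm, Real.sq_sqrt (by positivity)]
  simp [dotp, sq]

lemma euclNorm_neg (u : Fin n → ℝ) : euclNorm (-u) = euclNorm u := by
  have : -u = (-1 : ℝ) • u := by ext i; simp
  rw [this, euclNorm_smul]; simp

end Stmt5Aux

open Stmt5Aux in
theorem stmt5 (d : ℕ) (ξ : Fin (d + 2) → (Fin (d + 1) → ℝ))
    (hin : (0 : Fin (d + 1) → ℝ) ∈ interior (convexHull ℝ (Set.range ξ)))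
    (f : Fin (d + 2) → ℝ) (V : ℝ) (γ₀ : Fin (d + 1) → ℝ)
    -- V is the minimum of γ ↦ max_i (f(ξᵢ) - ⟨ξᵢ, γ⟩), attained (uniquely) at γ₀
    (hV : IsLeast (Set.range fun γ : Fin (d + 1) → ℝ => ⨆ i, (f i - dotp (ξ i) γ)) V)
    (hγ₀ : (⨆ i, (f i - dotp (ξ i) γ₀)) = V)
    (huniq : ∀ γ, (⨆ i, (f i - dotp (ξ i) γ)) = V → γ = γ₀) :
    -- hᵢ: distance from the origin to the affine hyperplane through {ξ_j : j ≠ i}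
    let h : Fin (d + 2) → ℝ :=
      fun i => distOrigAffine (Set.range fun j : Fin (d + 1) => ξ (i.succAbove j))
    |V| ≤ (⨆ i, |f i|) ∧
      euclNorm γ₀ ≤ (⨆ i, |f i|) * ⨆ i, (h i)⁻¹ := by
  classical
  intro h
  set M : ℝ := ⨆ i, |f i| with hMdef
  have hbdd : ∀ g : Fin (d + 2) → ℝ, BddAbove (Set.range g) :=
    fun g => (Set.finite_range g).bddAbove
  have hfM : ∀ i, |f i| ≤ M := fun i => by rw [hMdef]; exact le_ciSup (f := fun i => |f i|) (hbdd _) i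
  have hM0 : 0 ≤ M := le_trans (abs_nonneg _) (hfM 0)
  -- affine basis
  have hspan : affineSpan ℝ (Set.range ξ) = ⊤ :=
    affineSpan_eq_top_of_nonempty_interior ⟨0, hin⟩
  have hcard : Fintype.card (Fin (d + 2)) = (d + 1) + 1 := by simp
  have hind : AffineIndependent ℝ ξ := by
    rw [affineIndependent_iff_finrank_vectorSpan_eq ℝ ξ hcard]
    rw [← direction_affineSpan, hspan, AffineSubspace.direction_top]
    simp [Module.finrank_fin_fun]
  let b : AffineBasis (Fin (d + 2)) ℝ (Fin (d + 1) → ℝ) := ⟨ξ, hind, hspan⟩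
  have hbfun : ⇑b = ξ := rfl
  have hcoordsum : ∀ x : Fin (d + 1) → ℝ, ∑ i, b.coord i x = 1 :=
    fun x => b.sum_coord_apply_eq_one x
  have hdecomp : ∀ x : Fin (d + 1) → ℝ, x = ∑ i, b.coord i x • ξ i := by
    intro x
    conv_lhs => rw [← b.affineCombination_coord_eq_self x]
    rw [Finset.affineCombination_eq_linear_combination _ _ _ (hcoordsum x), hbfun]
  have hcoord0 : ∀ i, 0 < b.coord i 0 := by
    have h2 : (0 : Fin (d+1) → ℝ) ∈ {x | ∀ i, 0 < b.coord i x} := by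
      rw [← b.interior_convexHull, hbfun]; exact hin
    exact h2
  -- membership in facet affine span from vanishing coordinate
  have hmem_of_coord : ∀ (i : Fin (d + 2)) (x : Fin (d + 1) → ℝ), b.coord i x = 0 →
      x ∈ affineSpan ℝ (Set.range fun j : Fin (d + 1) => ξ (i.succAbove j)) := by
    intro i x hx
    set p : Fin (d + 1) → (Fin (d + 1) → ℝ) := fun j => ξ (i.succAbove j) with hp
    set w : Fin (d + 1) → ℝ := fun j => b.coord (i.succAbove j) x with hw
    have hsum : ∑ j, w j = 1 := by
      have := hcoordsum x
      rw [Fin.sum_univ_succAbove (fun k => b.coord k x) i, hx, zero_add] at this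
      exact this
    have hxc : x = ∑ j, w j • p j := by
      conv_lhs => rw [hdecomp x]
      rw [Fin.sum_univ_succAbove (fun k => b.coord k x • ξ k) i, hx, zero_smul, zero_add]
    have := affineCombination_mem_affineSpan hsum p
    rwa [Finset.affineCombination_eq_linear_combination _ _ _ hsum, ← hxc] at this
  have hcoord_of_mem : ∀ (i : Fin (d + 2)) (x : Fin (d + 1) → ℝ),
      x ∈ affineSpan ℝ (Set.range fun j : Fin (d + 1) => ξ (i.succAbove j)) →
      b.coord i x = 0 := by
    intro i x hx
    set S : AffineSubspace ℝ ℝ := AffineSubspace.mk' (0 : ℝ) (⊥ : Submodule ℝ ℝ) with hS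
    have hmem : ∀ y : ℝ, y ∈ S ↔ y = 0 := by
      intro y
      rw [hS, AffineSubspace.mem_mk']
      simp [vsub_eq_sub, sub_eq_zero]
    have hle : affineSpan ℝ (Set.range fun j : Fin (d + 1) => ξ (i.succAbove j)) ≤
        S.comap (b.coord i) := by
      rw [affineSpan_le]
      rintro y ⟨j, rfl⟩
      show b.coord i (ξ (i.succAbove j)) ∈ S
      rw [hmem, ← hbfun, b.coord_apply]
      simp [Fin.succAbove_ne i j, (Fin.succAbove_ne i j).symm]
    exact (hmem _).mp (hle hx)
  -- facet span basics
  have hh : ∀ i : Fin (d + 2), h i = sInf (euclNorm ''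
      (affineSpan ℝ (Set.range fun j : Fin (d + 1) => ξ (i.succAbove j)) :
        Set (Fin (d + 1) → ℝ))) := fun i => rfl
  have hspan_ne : ∀ i : Fin (d + 2),
      ((affineSpan ℝ (Set.range fun j : Fin (d + 1) => ξ (i.succAbove j)) :
        Set (Fin (d + 1) → ℝ))).Nonempty :=
    fun i => ⟨ξ (i.succAbove 0), subset_affineSpan ℝ _ ⟨0, rfl⟩⟩
  have hSbb : ∀ i : Fin (d + 2), BddBelow (euclNorm ''
      (affineSpan ℝ (Set.range fun j : Fin (d + 1) => ξ (i.succAbove j)) :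
        Set (Fin (d + 1) → ℝ))) := by
    intro i
    refine ⟨0, ?_⟩
    rintro y ⟨x, -, rfl⟩
    exact euclNorm_nonneg x
  have hle_of_mem : ∀ (i : Fin (d + 2)) (x : Fin (d + 1) → ℝ),
      x ∈ (affineSpan ℝ (Set.range fun j : Fin (d + 1) => ξ (i.succAbove j)) :
        Set (Fin (d + 1) → ℝ)) → h i ≤ euclNorm x := by
    intro i x hx
    rw [hh i]
    exact csInf_le (hSbb i) ⟨x, hx, rfl⟩
  have hpos : ∀ i, 0 < h i := by
    intro i
    have hclosed : IsClosed ((affineSpan ℝ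
        (Set.range fun j : Fin (d + 1) => ξ (i.succAbove j)) : Set (Fin (d + 1) → ℝ))) :=
      AffineSubspace.closed_of_finiteDimensional _
    have h0 : (0 : Fin (d + 1) → ℝ) ∉ (affineSpan ℝ
        (Set.range fun j : Fin (d + 1) => ξ (i.succAbove j)) : Set (Fin (d + 1) → ℝ)) := by
      intro hx
      exact absurd (hcoord_of_mem i 0 hx) (ne_of_gt (hcoord0 i))
    obtain ⟨ε, hε, hball⟩ := Metric.isOpen_iff.mp hclosed.isOpen_compl 0 h0
    have key : ∀ x ∈ (affineSpan ℝ
        (Set.range fun j : Fin (d + 1) => ξ (i.succAbove j)) : Set (Fin (d + 1) → ℝ)),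
        ε ≤ euclNorm x := by
      intro x hx
      by_contra hlt
      push_neg at hlt
      have hd : dist x 0 < ε := by
        rw [dist_pi_lt_iff hε]
        intro k
        rw [Real.dist_eq]
        simp only [Pi.zero_apply, sub_zero]
        exact lt_of_le_of_lt (abs_le_euclNorm x k) hlt
      exact (hball (Metric.mem_ball.mpr hd)) hx
    rw [hh i]
    refine lt_of_lt_of_le hε (le_csInf ((hspan_ne i).image _) ?_)
    rintro y ⟨x, hx, rfl⟩
    exact key x hx
  obtain ⟨i₀, hi₀⟩ := Finite.exists_min h
  have hmpos : 0 < h i₀ := hpos i₀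
  -- support-function lower bound
  have hsupp : ∀ u : Fin (d + 1) → ℝ, euclNorm u = 1 → ∃ j, h i₀ ≤ dotp (ξ j) u := by
    intro u hu
    by_contra hc
    push_neg at hc
    set y : Fin (d + 1) → ℝ := h i₀ • u with hy
    have hyn : euclNorm y = h i₀ := by
      rw [hy, euclNorm_smul, hu, mul_one, abs_of_pos hmpos]
    have hyc : ∀ i, 0 ≤ b.coord i y := by
      intro i
      by_contra hneg
      push_neg at hneg
      have hc0p : 0 < b.coord i 0 := hcoord0 i
      have hden : 0 < b.coord i 0 - b.coord i y := by linarith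
      set t : ℝ := b.coord i 0 / (b.coord i 0 - b.coord i y) with ht
      have ht0 : 0 < t := div_pos hc0p hden
      have ht1 : t < 1 := by rw [ht, div_lt_one hden]; linarith
      have hz : b.coord i (t • y) = 0 := by
        have h1 : (t • y : Fin (d + 1) → ℝ) =
            AffineMap.lineMap (0 : Fin (d + 1) → ℝ) y t := by
          rw [AffineMap.lineMap_apply]
          simp
        rw [h1, AffineMap.apply_lineMap, AffineMap.lineMap_apply]
        rw [vsub_eq_sub, vadd_eq_add, smul_eq_mul, ht]
        field_simp
        ring
      have hmem := hmem_of_coord i _ hz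
      have hle1 : h i ≤ euclNorm (t • y) := hle_of_mem i _ hmem
      have hnz : euclNorm (t • y) = t * h i₀ := by
        rw [euclNorm_smul, hyn, abs_of_pos ht0]
      rw [hnz] at hle1
      have : h i₀ ≤ t * h i₀ := le_trans (hi₀ i) hle1
      nlinarith
    have hyd : dotp y u = h i₀ := by
      rw [hy, dotp_smul_left, dotp_self, hu]; ring
    have hex : ∃ i, 0 < b.coord i y := by
      by_contra hall
      push_neg at hall
      have : ∑ i, b.coord i y ≤ 0 :=
        Finset.sum_nonpos fun i _ => hall i
      rw [hcoordsum y] at this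
      linarith
    obtain ⟨i₁, hi₁⟩ := hex
    have hlt : dotp y u < h i₀ := by
      have hrw : dotp y u = ∑ i, b.coord i y * dotp (ξ i) u := by
        conv_lhs => rw [hdecomp y]
        rw [dotp_sum_left]
      rw [hrw]
      have hlt2 : ∑ i, b.coord i y * dotp (ξ i) u < ∑ i, b.coord i y * h i₀ := by
        refine Finset.sum_lt_sum (fun i _ => ?_) ⟨i₁, Finset.mem_univ i₁, ?_⟩
        · exact mul_le_mul_of_nonneg_left (le_of_lt (hc i)) (hyc i)
        · exact mul_lt_mul_of_pos_left (hc i₁) hi₁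
      have : ∑ i, b.coord i y * h i₀ = h i₀ := by
        rw [← Finset.sum_mul, hcoordsum y, one_mul]
      linarith
    linarith [hyd, hlt]
  -- Part 1 : |V| ≤ M
  have hV1 : V ≤ M := by
    have h0mem := hV.2 ⟨0, rfl⟩
    refine le_trans h0mem (ciSup_le fun i => ?_)
    rw [dotp_zero_right, sub_zero]
    exact le_trans (le_abs_self _) (hfM i)
  have hV2 : -M ≤ V := by
    obtain ⟨γ₁, hγ₁⟩ := hV.1
    have hγ₁' : (⨆ i, (f i - dotp (ξ i) γ₁)) = V := hγ₁
    have hsum0 : ∑ i, b.coord i 0 * dotp (ξ i) γ₁ = 0 := by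
      rw [← dotp_sum_left, ← hdecomp 0, dotp_zero_left]
    have hex : ∃ i, dotp (ξ i) γ₁ ≤ 0 := by
      by_contra hall
      push_neg at hall
      have : 0 < ∑ i, b.coord i 0 * dotp (ξ i) γ₁ :=
        Finset.sum_pos (fun i _ => mul_pos (hcoord0 i) (hall i)) Finset.univ_nonempty
      linarith
    obtain ⟨i, hi⟩ := hex
    have hle1 : f i - dotp (ξ i) γ₁ ≤ V := by
      rw [← hγ₁']
      exact le_ciSup (f := fun i => f i - dotp (ξ i) γ₁) (hbdd _) i
    have := hfM i
    have := neg_abs_le (f i)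
    linarith
  -- all constraints are active at the minimizer
  have hterm_le : ∀ j, f j - dotp (ξ j) γ₀ ≤ V := by
    intro j
    rw [← hγ₀]
    exact le_ciSup (f := fun i => f i - dotp (ξ i) γ₀) (hbdd _) j
  have hactive : ∀ j, f j - dotp (ξ j) γ₀ = V := by
    by_contra hcon
    push_neg at hcon
    obtain ⟨i, hi⟩ := hcon
    set A : Finset (Fin (d + 2)) :=
      Finset.univ.filter (fun j => f j - dotp (ξ j) γ₀ = V) with hA
    have hAne : A.Nonempty := by
      obtain ⟨j₀, hj₀⟩ := Finite.exists_max (fun j => f j - dotp (ξ j) γ₀)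
      have hge : V ≤ f j₀ - dotp (ξ j₀) γ₀ := by
        rw [← hγ₀]; exact ciSup_le hj₀
      exact ⟨j₀, Finset.mem_filter.mpr ⟨Finset.mem_univ _,
        le_antisymm (hterm_le j₀) hge⟩⟩
    have hAcard : A.card ≤ d + 1 := by
      have hsub : A ⊆ Finset.univ.erase i := by
        intro j hj
        rcases Finset.mem_filter.mp hj with ⟨-, hjV⟩
        refine Finset.mem_erase.mpr ⟨?_, Finset.mem_univ _⟩
        rintro rfl
        exact hi hjV
      calc A.card ≤ (Finset.univ.erase i).card := Finset.card_le_card hsub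
        _ = d + 1 := by
            rw [Finset.card_erase_of_mem (Finset.mem_univ i)]
            simp
    have hw : ∃ w : Fin (d + 1) → ℝ, w ≠ 0 ∧ ∀ j ∈ A, 0 ≤ dotp (ξ j) w := by
      set T : (Fin (d + 1) → ℝ) →ₗ[ℝ] (A → ℝ) :=
        { toFun := fun w a => dotp (ξ a) w
          map_add' := by
            intro x y
            funext a
            exact dotp_add_right _ _ _
          map_smul' := by
            intro c x
            funext a
            exact dotp_smul_right _ _ _ } with hT
      have hTapp : ∀ (w : Fin (d + 1) → ℝ) (a : A), T w a = dotp (ξ a) w :=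
        fun w a => rfl
      by_cases hker : LinearMap.ker T = ⊥
      · have hinj : Function.Injective T := LinearMap.ker_eq_bot.mp hker
        have hrank : Module.finrank ℝ (Fin (d + 1) → ℝ) ≤ Module.finrank ℝ (↥A → ℝ) :=
          LinearMap.finrank_le_finrank_of_injective hinj
        have hfr1 : Module.finrank ℝ (Fin (d + 1) → ℝ) = d + 1 := Module.finrank_fin_fun ℝ
        have hfr2 : Module.finrank ℝ (↥A → ℝ) = A.card := by
          rw [Module.finrank_pi]
          exact Fintype.card_coe A
        have hcardA : Module.finrank ℝ (Fin (d + 1) → ℝ) = Module.finrank ℝ (↥A → ℝ) := by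
          rw [hfr1, hfr2]
          omega
        have hsurj : Function.Surjective T :=
          (LinearMap.injective_iff_surjective_of_finrank_eq_finrank hcardA).mp hinj
        obtain ⟨w, hwT⟩ := hsurj (fun _ => (1 : ℝ))
        refine ⟨w, ?_, ?_⟩
        · rintro rfl
          obtain ⟨a, ha⟩ := hAne
          have h1 := congrFun hwT ⟨a, ha⟩
          rw [hTapp, dotp_zero_right] at h1
          norm_num at h1
        · intro j hj
          have h1 := congrFun hwT ⟨j, hj⟩
          rw [hTapp] at h1
          rw [h1]
          norm_num
      · obtain ⟨w, hwker, hw0⟩ := (Submodule.ne_bot_iff _).mp hker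
        refine ⟨w, hw0, fun j hj => ?_⟩
        have h1 := congrFun (LinearMap.mem_ker.mp hwker) ⟨j, hj⟩
        rw [hTapp, Pi.zero_apply] at h1
        rw [h1]
    obtain ⟨w, hw0, hwA⟩ := hw
    set q : Fin (d + 2) → ℝ := fun j =>
      if dotp (ξ j) w < 0 ∧ j ∉ A then (f j - dotp (ξ j) γ₀ - V) / dotp (ξ j) w else 1
      with hq
    have hqdef : ∀ j, q j =
        if dotp (ξ j) w < 0 ∧ j ∉ A then (f j - dotp (ξ j) γ₀ - V) / dotp (ξ j) w else 1 :=
      fun j => rfl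
    have hqpos : ∀ j, 0 < q j := by
      intro j
      rw [hqdef]
      split_ifs with hcase
      · have hgj : f j - dotp (ξ j) γ₀ < V := by
          refine lt_of_le_of_ne (hterm_le j) ?_
          intro hEq
          exact hcase.2 (Finset.mem_filter.mpr ⟨Finset.mem_univ _, hEq⟩)
        exact div_pos_iff.mpr (Or.inr ⟨by linarith, hcase.1⟩)
      · norm_num
    set t : ℝ := Finset.univ.inf' Finset.univ_nonempty q with htdef
    have htpos : 0 < t := by
      rw [htdef]
      exact (Finset.lt_inf'_iff _).mpr fun j _ => hqpos j
    have htle : ∀ j, t ≤ q j := fun j => Finset.inf'_le q (Finset.mem_univ j)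
    have hbound : (⨆ j, (f j - dotp (ξ j) (γ₀ + t • w))) ≤ V := by
      refine ciSup_le fun j => ?_
      have hexp : f j - dotp (ξ j) (γ₀ + t • w) =
          (f j - dotp (ξ j) γ₀) - t * dotp (ξ j) w := by
        rw [dotp_add_right, dotp_smul_right]
        ring
      rw [hexp]
      by_cases hjA : j ∈ A
      · have hgj : f j - dotp (ξ j) γ₀ = V := (Finset.mem_filter.mp hjA).2
        have hge0 : 0 ≤ dotp (ξ j) w := hwA j hjA
        nlinarith
      · have hgj : f j - dotp (ξ j) γ₀ < V := by
          refine lt_of_le_of_ne (hterm_le j) ?_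
          intro hEq
          exact hjA (Finset.mem_filter.mpr ⟨Finset.mem_univ _, hEq⟩)
        by_cases hej : dotp (ξ j) w < 0
        · have hqj : q j = (f j - dotp (ξ j) γ₀ - V) / dotp (ξ j) w := by
            rw [hqdef, if_pos ⟨hej, hjA⟩]
          have hle2 : t ≤ (f j - dotp (ξ j) γ₀ - V) / dotp (ξ j) w := by
            rw [← hqj]; exact htle j
          have h3 := mul_le_mul_of_nonpos_right hle2 (le_of_lt hej)
          rw [div_mul_cancel₀ _ (ne_of_lt hej)] at h3
          linarith
        · push_neg at hej
          nlinarith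
    have hge : V ≤ ⨆ j, (f j - dotp (ξ j) (γ₀ + t • w)) := hV.2 ⟨γ₀ + t • w, rfl⟩
    have heq := huniq _ (le_antisymm hbound hge)
    have hzero : t • w = 0 := by
      have h3 : γ₀ + t • w = γ₀ := heq
      rwa [add_eq_left] at h3
    rcases smul_eq_zero.mp hzero with h4 | h4
    · exact absurd h4 (ne_of_gt htpos)
    · exact hw0 h4
  -- conclusion
  refine ⟨abs_le.mpr ⟨hV2, hV1⟩, ?_⟩
  have hsupM : (h i₀)⁻¹ ≤ ⨆ k, (h k)⁻¹ :=
    le_ciSup (f := fun k => (h k)⁻¹) (hbdd _) i₀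
  by_cases hγ : γ₀ = 0
  · rw [hγ, euclNorm_zero]
    exact mul_nonneg hM0 (le_trans (inv_nonneg.mpr hmpos.le) hsupM)
  · have hnpos : 0 < euclNorm γ₀ := euclNorm_pos hγ
    set nn : ℝ := euclNorm γ₀ with hnn
    set u : Fin (d + 1) → ℝ := nn⁻¹ • γ₀ with hu
    have hun : euclNorm u = 1 := by
      rw [hu, euclNorm_smul, abs_of_pos (inv_pos.mpr hnpos), ← hnn]
      field_simp
    have hgam : γ₀ = nn • u := by
      rw [hu, smul_smul, mul_inv_cancel₀ (ne_of_gt hnpos), one_smul]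
    obtain ⟨jp, hjp⟩ := hsupp u hun
    obtain ⟨jm, hjm⟩ := hsupp (-u) (by rw [euclNorm_neg]; exact hun)
    have hdp : ∀ j, dotp (ξ j) γ₀ = nn * dotp (ξ j) u := by
      intro j
      conv_lhs => rw [hgam]
      exact dotp_smul_right _ _ _
    have h1 : f jp = V + nn * dotp (ξ jp) u := by
      have := hactive jp
      rw [hdp jp] at this
      linarith
    have h2 : f jm = V + nn * dotp (ξ jm) u := by
      have := hactive jm
      rw [hdp jm] at this
      linarith
    have hjm' : dotp (ξ jm) u ≤ -(h i₀) := by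
      have hnegu : dotp (ξ jm) (-u) = -dotp (ξ jm) u := by
        have hne : (-u : Fin (d + 1) → ℝ) = (-1 : ℝ) • u := by ext k; simp
        rw [hne, dotp_smul_right]; ring
      rw [hnegu] at hjm
      linarith
    have hup : nn * h i₀ ≤ nn * dotp (ξ jp) u :=
      mul_le_mul_of_nonneg_left hjp hnpos.le
    have hum : nn * dotp (ξ jm) u ≤ nn * (-(h i₀)) :=
      mul_le_mul_of_nonneg_left hjm' hnpos.le
    have hfpM : f jp ≤ M := le_trans (le_abs_self _) (hfM jp)
    have hfmM : -M ≤ f jm := by linarith [neg_abs_le (f jm), hfM jm]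
    have hnm : nn * h i₀ ≤ M := by linarith
    have hfin : nn ≤ M * (h i₀)⁻¹ := by
      rw [← div_eq_mul_inv, le_div_iff₀ hmpos]
      exact hnm
    exact le_trans hfin (mul_le_mul_of_nonneg_left hsupM hM0)
end
end

section
/- Let ξ₁,…,ξ_k be nonzero vectors in ℝ^d satisfying: (i) no d of them are linearly dependent; (ii) there is no ω ∈ ℝ^d with ⟨ω,ξᵢ⟩ > 0 for all i. Then for any real numbers f(ξ₁),…,f(ξ_k), min_{γ∈ℝ^d} max_i [f(ξᵢ) − ⟨ξᵢ,γ⟩] equals the maximum of Σᵢ pᵢ f(ξᵢ) over all extreme points p = (p₁,…,p_k) of the convex set of risk-neutral probability laws on {ξ₁,…,ξ_k}. -/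
/-!
This is linear-programming duality. Weak duality: for a risk-neutral law `p` and any `γ`,
`∑ pᵢ f(ξᵢ) = ∑ pᵢ (f(ξᵢ) - ⟨ξᵢ, γ⟩) ≤ maxᵢ (f(ξᵢ) - ⟨ξᵢ, γ⟩)`. Let `V` be the maximum of
`p ↦ ∑ pᵢ f(ξᵢ)` over the compact set of risk-neutral laws; as in Krein–Milman, it is attained
at an extreme point of the exposed face where it is maximal. To find `γ` with
`f(ξᵢ) - ⟨ξᵢ, γ⟩ ≤ V` for all `i`, Farkas' lemma separates `(0, -1)` from the cone generated by
the vectors `(ξᵢ, V - f(ξᵢ))`; this cone is closed because, by Carathéodory's theorem for cones,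
it is a finite union of cones over linearly independent families. The same argument with `f = 0`
is Gordan's alternative, which turns (ii) into the nonemptiness of the set of risk-neutral laws.
-/

noncomputable section

open Finset

section Caratheodory

variable {𝕜 E ι : Type*} [Field 𝕜] [LinearOrder 𝕜] [IsStrictOrderedRing 𝕜]
  [AddCommGroup E] [Module 𝕜 E]

theorem exists_sum_smul_eq_of_not_linearIndepOn {v : ι → E} {s : Finset ι}
    {c : ι → 𝕜} (hc : ∀ i ∈ s, 0 ≤ c i) (hs : ¬ LinearIndepOn 𝕜 v s) :
    ∃ j ∈ s, ∃ c' : ι → 𝕜, (∀ i ∈ s, 0 ≤ c' i) ∧ c' j = 0 ∧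
      ∑ i ∈ s, c' i • v i = ∑ i ∈ s, c i • v i := by
  obtain ⟨a, ha, hpos⟩ : ∃ a : ι → 𝕜, ∑ i ∈ s, a i • v i = 0 ∧ ∃ i ∈ s, 0 < a i := by
    obtain ⟨a, ha, i, hi, hai⟩ := not_linearIndepOn_finset_iff.1 hs
    rcases hai.lt_or_gt with hneg | hpos
    · exact ⟨-a, by simp [neg_smul, ha], i, hi, by simpa using hneg⟩
    · exact ⟨a, ha, i, hi, hpos⟩
  -- subtract the largest multiple `t • a` of the relation that keeps all coefficients `≥ 0`
  obtain ⟨j, hj, hmin⟩ := (s.filter (0 < a ·)).exists_min_image (fun i => c i / a i)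
    (by simpa [Finset.Nonempty] using hpos)
  rw [mem_filter] at hj
  set t := c j / a j
  have ht : 0 ≤ t := div_nonneg (hc j hj.1) hj.2.le
  refine ⟨j, hj.1, c - t • a, fun i hi => ?_, ?_, ?_⟩
  · simp only [Pi.sub_apply, Pi.smul_apply, smul_eq_mul, sub_nonneg]
    rcases le_or_gt (a i) 0 with hai | hai
    · exact (mul_nonpos_of_nonneg_of_nonpos ht hai).trans (hc i hi)
    · exact (le_div_iff₀ hai).1 (hmin i (mem_filter.2 ⟨hi, hai⟩))
  · simp [t, div_mul_cancel₀ _ hj.2.ne']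
  · simp [sub_smul, sum_sub_distrib, mul_smul, ← smul_sum, ha]

/-- **Carathéodory's theorem** for cones. -/
theorem exists_linearIndepOn_sum_smul_eq [DecidableEq ι] {v : ι → E} {s : Finset ι}
    {c : ι → 𝕜} (hc : ∀ i ∈ s, 0 ≤ c i) :
    ∃ t ⊆ s, LinearIndepOn 𝕜 v t ∧ ∃ c' : ι → 𝕜, (∀ i ∈ t, 0 ≤ c' i) ∧
      ∑ i ∈ t, c' i • v i = ∑ i ∈ s, c i • v i := by
  induction s using Finset.strongInduction generalizing c with
  | H s ih =>
  by_cases hs : LinearIndepOn 𝕜 v s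
  · exact ⟨s, subset_refl _, hs, c, hc, rfl⟩
  obtain ⟨j, hj, c', hc', hc'j, hsum⟩ := exists_sum_smul_eq_of_not_linearIndepOn hc hs
  obtain ⟨t, hts, ht, c'', hc'', hsum'⟩ := ih (s.erase j) (erase_ssubset hj)
    (fun i hi => hc' i (mem_of_mem_erase hi))
  refine ⟨t, hts.trans (erase_subset j s), ht, c'', hc'', ?_⟩
  rw [hsum', ← hsum, ← add_sum_erase s _ hj, hc'j, zero_smul, zero_add]

end Caratheodory

theorem PointedCone.isClosed_hull_range {E ι : Type*} [AddCommGroup E] [Module ℝ E]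
    [TopologicalSpace E] [IsTopologicalAddGroup E] [ContinuousSMul ℝ E] [T2Space E] [Finite ι]
    (v : ι → E) : IsClosed (hull ℝ (Set.range v) : Set E) := by
  classical
  have := Fintype.ofFinite ι
  have hcover : (hull ℝ (Set.range v) : Set E) = ⋃ (t : Finset ι) (_ : LinearIndepOn ℝ v t),
      Fintype.linearCombination ℝ (fun i : (t : Set ι) => v i) '' Set.Ici 0 := by
    ext x
    simp only [SetLike.mem_coe, Set.mem_iUnion, Set.mem_image, Set.mem_Ici]
    constructor
    · intro hx
      obtain ⟨c, rfl⟩ := (Submodule.mem_span_range_iff_exists_fun _).1 hx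
      obtain ⟨t, -, ht, c', hc', hsum⟩ := exists_linearIndepOn_sum_smul_eq (v := v)
        (s := univ) (c := fun i => (c i : ℝ)) (fun i _ => (c i).2)
      exact ⟨t, ht, fun i => c' i, fun i => hc' i i.2,
        (sum_coe_sort t fun i => c' i • v i).trans hsum⟩
    · rintro ⟨t, -, c, hc, rfl⟩
      exact sum_mem fun i _ => (hull ℝ _).smul_mem (hc i) (subset_hull ⟨i, rfl⟩)
  rw [hcover]
  exact isClosed_iUnion_of_finite fun t => isClosed_iUnion_of_finite fun ht =>
    (LinearMap.isClosedEmbedding_of_injective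
      (LinearMap.ker_eq_bot.2 ht.fintypeLinearCombination_injective)).isClosedMap _ isClosed_Ici

theorem IsCompact.exists_mem_extremePoints_isMaxOn {E : Type*} [AddCommGroup E] [Module ℝ E]
    [TopologicalSpace E] [T2Space E] [IsTopologicalAddGroup E] [ContinuousSMul ℝ E]
    [LocallyConvexSpace ℝ E] {s : Set E} (hs : IsCompact s) (hne : s.Nonempty)
    (l : StrongDual ℝ E) : ∃ x ∈ s.extremePoints ℝ, IsMaxOn l s x := by
  obtain ⟨y, hy, hymax⟩ := hs.exists_isMaxOn hne l.continuous.continuousOn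
  have hexp : IsExposed ℝ s (l.toExposed s) := fun _ => ⟨l, rfl⟩
  obtain ⟨x, hx⟩ := (hexp.isCompact hs).extremePoints_nonempty ⟨y, hy, hymax⟩
  exact ⟨x, hexp.isExtreme.extremePoints_subset_extremePoints hx, (extremePoints_subset hx).2⟩

def riskNeutralLaws {ι E : Type*} [Fintype ι] [AddCommGroup E] [Module ℝ E] (ξ : ι → E) :
    Set (ι → ℝ) :=
  {p | (∀ i, 0 ≤ p i) ∧ (∑ i, p i = 1) ∧ (∑ i, p i • ξ i = 0)}

section RiskNeutral

variable {ι E : Type*} [Fintype ι] [AddCommGroup E] [Module ℝ E]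

theorem riskNeutralLaws_eq (ξ : ι → E) :
    riskNeutralLaws ξ = stdSimplex ℝ ι ∩ Fintype.linearCombination ℝ ξ ⁻¹' {0} := by
  ext p
  simp [riskNeutralLaws, stdSimplex, Fintype.linearCombination_apply, and_assoc]

theorem isCompact_riskNeutralLaws [TopologicalSpace E] [T1Space E] [IsTopologicalAddGroup E]
    [ContinuousSMul ℝ E] (ξ : ι → E) : IsCompact (riskNeutralLaws ξ) := by
  rw [riskNeutralLaws_eq]
  exact (isCompact_stdSimplex ℝ ι).inter_right <| isClosed_singleton.preimage <|
    continuous_finsetSum _ fun i _ => (continuous_apply i).smul continuous_const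

theorem sum_mul_le_ciSup_sub {F : Type*} [FunLike F E ℝ] [LinearMapClass F ℝ E ℝ]
    {ξ : ι → E} {p : ι → ℝ} (hp : p ∈ riskNeutralLaws ξ) (f : ι → ℝ) (φ : F) :
    ∑ i, p i * f i ≤ ⨆ i, (f i - φ (ξ i)) := by
  have hφ : ∑ i, p i * φ (ξ i) = 0 := by
    simpa [map_sum, map_smul] using congrArg φ hp.2.2
  calc ∑ i, p i * f i = ∑ i, p i * (f i - φ (ξ i)) := by
        simp [mul_sub, sum_sub_distrib, hφ]
    _ ≤ ∑ i, p i * ⨆ j, (f j - φ (ξ j)) := by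
        gcongr with i
        · exact hp.1 i
        · exact le_ciSup (f := fun j => f j - φ (ξ j)) (Set.finite_range _).bddAbove i
    _ = ⨆ j, (f j - φ (ξ j)) := by rw [← sum_mul, hp.2.1, one_mul]

theorem exists_mem_riskNeutralLaws_lt_sum_mul {ξ : ι → E} {f : ι → ℝ} {V : ℝ} {c : ι → ℝ}
    (hc : ∀ i, 0 ≤ c i) (hξ : ∑ i, c i • ξ i = 0) (hf : ∑ i, c i * (V - f i) = -1) :
    ∃ p ∈ riskNeutralLaws ξ, V < ∑ i, p i * f i := by
  set S := ∑ i, c i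
  have hS : 0 < S := by
    refine (sum_nonneg fun i _ => hc i).lt_of_ne fun hS => ?_
    have hc0 := (sum_eq_zero_iff_of_nonneg fun i _ => hc i).1 hS.symm
    simp [hc0 _ (mem_univ _)] at hf
  refine ⟨fun i => c i / S, ⟨fun i => div_nonneg (hc i) hS.le, ?_, ?_⟩, ?_⟩
  · rw [← sum_div, div_self hS.ne']
  · simp_rw [div_eq_inv_mul, mul_smul, ← smul_sum, hξ, smul_zero]
  · have hcf : ∑ i, c i * f i = V * S + 1 := by
      simp only [mul_sub, sum_sub_distrib, ← sum_mul] at hf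
      simp only [S, mul_comm V]
      linarith
    have hval : ∑ i, c i / S * f i = V + S⁻¹ := by
      simp_rw [div_mul_eq_mul_div, ← sum_div, hcf]
      field_simp
    linarith [inv_pos.2 hS]

section Duality

variable [TopologicalSpace E] [IsTopologicalAddGroup E] [ContinuousSMul ℝ E] [T2Space E]
  [LocallyConvexSpace ℝ E]

theorem exists_forall_sub_le_of_forall_riskNeutralLaws_le {ξ : ι → E} {f : ι → ℝ} {V : ℝ}
    (hV : ∀ p ∈ riskNeutralLaws ξ, ∑ i, p i * f i ≤ V) :
    ∃ φ : StrongDual ℝ E, ∀ i, f i - φ (ξ i) ≤ V := by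
  set u : ι → E × ℝ := fun i => (ξ i, V - f i)
  let C : ProperCone ℝ (E × ℝ) :=
    { toSubmodule := PointedCone.hull ℝ (Set.range u)
      isClosed' := PointedCone.isClosed_hull_range u }
  have hC : ((0 : E), (-1 : ℝ)) ∉ C := by
    intro h
    obtain ⟨c, hc⟩ := (Submodule.mem_span_range_iff_exists_fun _).1 h
    have hξ : ∑ i, (c i : ℝ) • ξ i = 0 := by
      simpa [u, Prod.fst_sum] using congrArg Prod.fst hc
    have hf : ∑ i, (c i : ℝ) * (V - f i) = -1 := by
      have := congrArg Prod.snd hc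
      simp only [u, Prod.snd_sum, Prod.smul_snd] at this
      exact this
    obtain ⟨p, hp, hVp⟩ := exists_mem_riskNeutralLaws_lt_sum_mul (fun i => (c i).2) hξ hf
    exact (hV p hp).not_gt hVp
  obtain ⟨ψ, hψC, hψ⟩ := C.hyperplane_separation_point hC
  set t := ψ (0, 1)
  have ht : 0 < t := by
    have : ψ (0, -1) = -t := by rw [← map_neg]; simp
    linarith
  refine ⟨t⁻¹ • ψ.comp (ContinuousLinearMap.inl ℝ E ℝ), fun i => ?_⟩
  have hu : 0 ≤ ψ (ξ i, 0) + (V - f i) * t := by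
    have hui : u i = (ξ i, 0) + (V - f i) • ((0 : E), (1 : ℝ)) := by simp [u]
    have := hψC (u i) (PointedCone.subset_hull ⟨i, rfl⟩)
    rwa [hui, map_add, map_smul, smul_eq_mul] at this
  have : f i - V ≤ t⁻¹ * ψ (ξ i, 0) := (le_inv_mul_iff₀ ht).2 (by linarith)
  simp only [smul_apply, ContinuousLinearMap.comp_apply,
    ContinuousLinearMap.inl_apply, smul_eq_mul]
  linarith

theorem riskNeutralLaws_nonempty {ξ : ι → E} (h : ¬ ∃ φ : StrongDual ℝ E, ∀ i, 0 < φ (ξ i)) :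
    (riskNeutralLaws ξ).Nonempty := by
  by_contra hempty
  obtain ⟨φ, hφ⟩ := exists_forall_sub_le_of_forall_riskNeutralLaws_le (f := 0) (V := -1)
    fun p hp => absurd ⟨p, hp⟩ hempty
  exact h ⟨φ, fun i => by linarith [hφ i, show (0 : ι → ℝ) i = 0 from rfl]⟩

theorem exists_isLeast_iSup_sub_isGreatest_extremePoints (ξ : ι → E) (f : ι → ℝ)
    (h : ¬ ∃ φ : StrongDual ℝ E, ∀ i, 0 < φ (ξ i)) :
    ∃ V : ℝ, IsLeast (Set.range fun φ : StrongDual ℝ E => ⨆ i, (f i - φ (ξ i))) V ∧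
      IsGreatest ((fun p : ι → ℝ => ∑ i, p i * f i) '' (riskNeutralLaws ξ).extremePoints ℝ) V := by
  let objective : StrongDual ℝ (ι → ℝ) :=
    LinearMap.toContinuousLinearMap (Fintype.linearCombination ℝ f)
  obtain ⟨p, hp, hpmax⟩ := (isCompact_riskNeutralLaws ξ).exists_mem_extremePoints_isMaxOn
    (riskNeutralLaws_nonempty h) objective
  have hpRN := extremePoints_subset hp
  obtain ⟨φ, hφ⟩ := exists_forall_sub_le_of_forall_riskNeutralLaws_le (fun q hq => hpmax hq)
  have : Nonempty ι := by
    obtain ⟨i, -⟩ := exists_ne_zero_of_sum_ne_zero (hpRN.2.1 ▸ one_ne_zero)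
    exact ⟨i⟩
  refine ⟨objective p, ⟨⟨φ, le_antisymm (ciSup_le hφ) (sum_mul_le_ciSup_sub hpRN f φ)⟩, ?_⟩,
    ⟨p, hp, rfl⟩, ?_⟩
  · rintro _ ⟨ψ, rfl⟩
    exact sum_mul_le_ciSup_sub hpRN f ψ
  · rintro _ ⟨q, hq, rfl⟩
    exact hpmax (extremePoints_subset hq)

end Duality

end RiskNeutral

theorem stmt8_general (d k : ℕ) (ξ : Fin k → (Fin d → ℝ)) (f : Fin k → ℝ)
    -- (ii): no ω has positive inner product with all the ξᵢ
    (hii : ¬ ∃ ω : Fin d → ℝ, ∀ i, 0 < dotp ω (ξ i)) :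
    -- the convex set of risk-neutral probability laws on {ξ₁,…,ξ_k}
    let RN : Set (Fin k → ℝ) :=
      { p | (∀ i, 0 ≤ p i) ∧ (∑ i, p i = 1) ∧ (∑ i, p i • ξ i = 0) }
    ∃ V : ℝ,
      IsLeast (Set.range fun γ : Fin d → ℝ => ⨆ i, (f i - dotp (ξ i) γ)) V ∧
      IsGreatest ((fun p : Fin k → ℝ => ∑ i, p i * f i) '' RN.extremePoints ℝ) V := by
  let e : (Fin d → ℝ) ≃ₗ[ℝ] StrongDual ℝ (Fin d → ℝ) :=
    (dotProductEquiv ℝ (Fin d)).trans LinearMap.toContinuousLinearMap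
  have he (γ x : Fin d → ℝ) : e γ x = dotp γ x := rfl
  obtain ⟨V, hleast, hgreatest⟩ := exists_isLeast_iSup_sub_isGreatest_extremePoints ξ f
    fun ⟨φ, hφ⟩ => hii ⟨e.symm φ, fun i => by simpa [← he] using hφ i⟩
  refine ⟨V, ?_, hgreatest⟩
  convert hleast using 1
  rw [← e.surjective.range_comp]
  congr! 2 with γ
  simp only [Function.comp_apply, he, dotp, mul_comm]

theorem stmt8 (d k : ℕ) (ξ : Fin k → (Fin d → ℝ)) (f : Fin k → ℝ)
    (hne : ∀ i, ξ i ≠ 0)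
    -- (i): no d of the vectors are linearly dependent
    (hi : ∀ s : Finset (Fin k), s.card = d → LinearIndependent ℝ (fun i : s => ξ i))
    -- (ii): no ω has positive inner product with all the ξᵢ
    (hii : ¬ ∃ ω : Fin d → ℝ, ∀ i, 0 < dotp ω (ξ i)) :
    -- the convex set of risk-neutral probability laws on {ξ₁,…,ξ_k}
    let RN : Set (Fin k → ℝ) :=
      { p | (∀ i, 0 ≤ p i) ∧ (∑ i, p i = 1) ∧ (∑ i, p i • ξ i = 0) }
    ∃ V : ℝ,
      IsLeast (Set.range fun γ : Fin d → ℝ => ⨆ i, (f i - dotp (ξ i) γ)) V ∧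
      IsGreatest ((fun p : Fin k → ℝ => ∑ i, p i * f i) '' RN.extremePoints ℝ) V :=
  stmt8_general d k ξ f hii
end
end
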